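/- arXiv:1112.5901 — 4 statements merged into one kernel-verified Lean document; each statement's English description precedes it below -/
import Mathlib

section
/- Let 1 < r < p < ∞, let X be a Banach space, and let θ ∈ (0,1) be defined by 1/r = θ + (1−θ)/p. Suppose there is a constant c > 0 such that every absolutely p-summing linear operator v : X → ℓ_p is absolutely r-summing with π_r(v) ≤ c·π_p(v). Then for every Banach space Y, every λ > 1, and every absolutely p-summing linear operator h : X → Y, h is absolutely 1-summing and π_1(h) ≤ 2·(2cλ)^{1/θ}·π_p(h). -/
open scoped BigOperators ENNReal
open Finset

noncomputable section

/-- `u` is absolutely `t`-summing with constant `C`: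
`(∑ⱼ ‖u xⱼ‖^t)^(1/t) ≤ C · sup_{φ ∈ B_{X*}} (∑ⱼ |φ xⱼ|^t)^(1/t)`. -/
def PSummingWith (𝕜 : Type*) [RCLike 𝕜] {X Y : Type*} [NormedAddCommGroup X] [NormedSpace 𝕜 X]
    [NormedAddCommGroup Y] [NormedSpace 𝕜 Y] (t : ℝ) (u : X →L[𝕜] Y) (C : ℝ) : Prop :=
  ∀ (m : ℕ) (x : Fin m → X),
    (∑ j, ‖u (x j)‖ ^ t) ^ (1 / t) ≤
      C * ⨆ φ : {φ : StrongDual 𝕜 X // ‖φ‖ ≤ 1},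
            (∑ j, ‖(φ : StrongDual 𝕜 X) (x j)‖ ^ t) ^ (1 / t)

/-- `u` is absolutely `t`-summing. -/
def PSumming (𝕜 : Type*) [RCLike 𝕜] {X Y : Type*} [NormedAddCommGroup X] [NormedSpace 𝕜 X]
    [NormedAddCommGroup Y] [NormedSpace 𝕜 Y] (t : ℝ) (u : X →L[𝕜] Y) : Prop :=
  ∃ C : ℝ, 0 ≤ C ∧ PSummingWith 𝕜 t u C

/-- The `t`-summing norm `π_t(u)`: the infimum of the admissible constants. -/
def piNorm (𝕜 : Type*) [RCLike 𝕜] {X Y : Type*} [NormedAddCommGroup X] [NormedSpace 𝕜 X]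
    [NormedAddCommGroup Y] [NormedSpace 𝕜 Y] (t : ℝ) (u : X →L[𝕜] Y) : ℝ :=
  sInf {C : ℝ | 0 ≤ C ∧ PSummingWith 𝕜 t u C}

namespace Extrap

variable (𝕜 : Type*) [RCLike 𝕜] {X : Type*} [NormedAddCommGroup X] [NormedSpace 𝕜 X]

/-- The sigma quantity `sup_{‖φ‖≤1} (∑ ‖φ xⱼ‖^t)^(1/t)`. -/
def sig (t : ℝ) {m : ℕ} (x : Fin m → X) : ℝ :=
  ⨆ φ : {φ : StrongDual 𝕜 X // ‖φ‖ ≤ 1},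
    (∑ j, ‖(φ : StrongDual 𝕜 X) (x j)‖ ^ t) ^ (1 / t)

variable {𝕜}

lemma term_le (t : ℝ) (ht : 0 ≤ t) {m : ℕ} (x : Fin m → X)
    (φ : {φ : StrongDual 𝕜 X // ‖φ‖ ≤ 1}) :
    (∑ j, ‖(φ : StrongDual 𝕜 X) (x j)‖ ^ t) ^ (1 / t) ≤ (∑ j, ‖x j‖ ^ t) ^ (1 / t) := by
  apply Real.rpow_le_rpow (by positivity) ?_ (by positivity)
  apply Finset.sum_le_sum
  intro j _
  apply Real.rpow_le_rpow (norm_nonneg _) ?_ ht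
  calc ‖(φ : StrongDual 𝕜 X) (x j)‖ ≤ ‖(φ : StrongDual 𝕜 X)‖ * ‖x j‖ :=
        (φ : StrongDual 𝕜 X).le_opNorm _
    _ ≤ 1 * ‖x j‖ := mul_le_mul_of_nonneg_right φ.2 (norm_nonneg _)
    _ = ‖x j‖ := one_mul _

lemma sig_bdd (t : ℝ) (ht : 0 ≤ t) {m : ℕ} (x : Fin m → X) :
    BddAbove (Set.range fun φ : {φ : StrongDual 𝕜 X // ‖φ‖ ≤ 1} =>
      (∑ j, ‖(φ : StrongDual 𝕜 X) (x j)‖ ^ t) ^ (1 / t)) :=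
  ⟨(∑ j, ‖x j‖ ^ t) ^ (1 / t), by rintro y ⟨φ, rfl⟩; exact term_le t ht x φ⟩

lemma le_sig (t : ℝ) (ht : 0 ≤ t) {m : ℕ} (x : Fin m → X)
    (φ : StrongDual 𝕜 X) (hφ : ‖φ‖ ≤ 1) :
    (∑ j, ‖φ (x j)‖ ^ t) ^ (1 / t) ≤ sig 𝕜 t x := by
  unfold sig
  exact le_ciSup (sig_bdd t ht x) (⟨φ, hφ⟩ : {φ : StrongDual 𝕜 X // ‖φ‖ ≤ 1})

lemma sig_nonneg (t : ℝ) (ht : 0 < t) {m : ℕ} (x : Fin m → X) : 0 ≤ sig 𝕜 t x := by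
  have h := le_sig (𝕜 := 𝕜) t ht.le x 0 (by simp)
  refine le_trans ?_ h
  simp only [ContinuousLinearMap.zero_apply, norm_zero, Real.zero_rpow ht.ne',
    Finset.sum_const, smul_zero]
  rw [Real.zero_rpow (by positivity : (1:ℝ)/t ≠ 0)]

lemma sig_le (t : ℝ) (ht : 0 ≤ t) {m : ℕ} (x : Fin m → X) :
    sig 𝕜 t x ≤ (∑ j, ‖x j‖ ^ t) ^ (1 / t) :=
  haveI : Nonempty {φ : StrongDual 𝕜 X // ‖φ‖ ≤ 1} := ⟨⟨0, by simp⟩⟩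
  ciSup_le fun φ => term_le t ht x φ

lemma sum_le_sig_rpow (t : ℝ) (ht : 0 < t) {m : ℕ} (x : Fin m → X)
    (φ : StrongDual 𝕜 X) (hφ : ‖φ‖ ≤ 1) :
    ∑ j, ‖φ (x j)‖ ^ t ≤ (sig 𝕜 t x) ^ t := by
  have h := le_sig t ht.le x φ hφ
  have h2 := Real.rpow_le_rpow (by positivity) h ht.le
  rwa [one_div, Real.rpow_inv_rpow (by positivity) ht.ne'] at h2

variable {Y : Type*} [NormedAddCommGroup Y] [NormedSpace 𝕜 Y]

lemma psw_eval {t : ℝ} {u : X →L[𝕜] Y} {C : ℝ} (h : PSummingWith 𝕜 t u C)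
    {m : ℕ} (x : Fin m → X) :
    (∑ j, ‖u (x j)‖ ^ t) ^ (1 / t) ≤ C * sig 𝕜 t x := h m x

lemma psw_mono {t : ℝ} (ht : 0 < t) {u : X →L[𝕜] Y} {C C' : ℝ} (hCC' : C ≤ C')
    (h : PSummingWith 𝕜 t u C) : PSummingWith 𝕜 t u C' := by
  intro m x
  exact (h m x).trans (mul_le_mul_of_nonneg_right hCC' (sig_nonneg t ht x))

lemma psw_single {t : ℝ} (ht : 1 ≤ t) {u : X →L[𝕜] Y} {C : ℝ} (hC : 0 ≤ C)
    (h : PSummingWith 𝕜 t u C) (x : X) : ‖u x‖ ≤ C * ‖x‖ := by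
  have ht0 : (0:ℝ) < t := lt_of_lt_of_le one_pos ht
  have h1 := psw_eval h (fun _ : Fin 1 => x)
  simp only [Finset.univ_unique, Finset.sum_singleton] at h1
  have hL : (‖u x‖ ^ t) ^ (1/t) = ‖u x‖ := by
    rw [one_div, Real.rpow_rpow_inv (norm_nonneg _) ht0.ne']
  rw [hL] at h1
  refine h1.trans ?_
  have := sig_le (𝕜 := 𝕜) t ht0.le (fun _ : Fin 1 => x)
  simp only [Finset.univ_unique, Finset.sum_singleton] at this
  rw [one_div, Real.rpow_rpow_inv (norm_nonneg _) ht0.ne'] at this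
  exact mul_le_mul_of_nonneg_left this hC

lemma piNorm_nonneg {t : ℝ} {u : X →L[𝕜] Y} (h : PSumming 𝕜 t u) : 0 ≤ piNorm 𝕜 t u := by
  obtain ⟨C, hC⟩ := h
  exact le_csInf ⟨C, hC⟩ fun b hb => hb.1

lemma piNorm_le {t : ℝ} {u : X →L[𝕜] Y} {C : ℝ} (hC : 0 ≤ C) (h : PSummingWith 𝕜 t u C) :
    piNorm 𝕜 t u ≤ C :=
  csInf_le ⟨0, fun b hb => hb.1⟩ ⟨hC, h⟩

lemma psw_of_lt {t : ℝ} (ht : 0 < t) {u : X →L[𝕜] Y} (hs : PSumming 𝕜 t u) {C : ℝ}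
    (hC : piNorm 𝕜 t u < C) : PSummingWith 𝕜 t u C := by
  obtain ⟨C', hC'⟩ := hs
  have hne : {D : ℝ | 0 ≤ D ∧ PSummingWith 𝕜 t u D}.Nonempty := ⟨C', hC'⟩
  obtain ⟨D, hD, hDC⟩ := (csInf_lt_iff ⟨0, fun b hb => hb.1⟩ hne).1 hC
  exact psw_mono ht hDC.le hD.2


/-- Two-factor Hölder for sums: `∑ F^α G^(1-α) ≤ (∑F)^α (∑G)^(1-α)`. -/
lemma sum_hoelder {m : ℕ} (F G : Fin m → ℝ) (hF : ∀ k, 0 ≤ F k) (hG : ∀ k, 0 ≤ G k)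
    {α : ℝ} (hα : 0 < α) (hα1 : α < 1) :
    ∑ k, (F k) ^ α * (G k) ^ (1 - α) ≤ (∑ k, F k) ^ α * (∑ k, G k) ^ (1 - α) := by
  have hconj : (1/α).HolderConjugate (1/(1-α)) :=
    Real.holderConjugate_one_div hα (by linarith) (by ring)
  have h := Real.inner_le_Lp_mul_Lq Finset.univ (fun k => (F k) ^ α) (fun k => (G k) ^ (1-α)) hconj
  have e1 : ∀ k, |(F k) ^ α| ^ (1/α) = F k := fun k => by
    rw [abs_of_nonneg (Real.rpow_nonneg (hF k) _), one_div,
      Real.rpow_rpow_inv (hF k) hα.ne']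
  have e2 : ∀ k, |(G k) ^ (1-α)| ^ (1/(1-α)) = G k := fun k => by
    rw [abs_of_nonneg (Real.rpow_nonneg (hG k) _), one_div,
      Real.rpow_rpow_inv (hG k) (by linarith)]
  simp only [e1, e2] at h
  calc ∑ k, (F k) ^ α * (G k) ^ (1 - α)
      ≤ (∑ k, F k) ^ (1/(1/α)) * (∑ k, G k) ^ (1/(1/(1-α))) := h
    _ = (∑ k, F k) ^ α * (∑ k, G k) ^ (1 - α) := by rw [one_div_one_div, one_div_one_div]

/-- The geometric-decay iteration bound. -/
lemma iteration_bound {K σ θ : ℝ} (hK : 0 < K) (hσ : 0 < σ) (hθ : 0 < θ) (hθ1 : θ < 1) :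
    ∀ (N : ℕ) (A : ℕ → ℝ), (∀ n, 0 ≤ A n) →
      (∀ n, A n ≤ K * σ ^ θ * (A (n+1)) ^ (1 - θ)) →
      A 0 ≤ K ^ (∑ j ∈ Finset.range N, (1-θ)^j) * σ ^ (1 - (1-θ)^N) * (A N) ^ ((1-θ)^N) := by
  intro N
  induction N with
  | zero =>
    intro A _ _
    simp [Real.rpow_one]
  | succ N ih =>
    intro A hA hrec
    have hβ0 : (0:ℝ) ≤ 1 - θ := by linarith
    have h1 : A 1 ≤ K ^ (∑ j ∈ Finset.range N, (1-θ)^j) * σ ^ (1 - (1-θ)^N)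
        * (A (N+1)) ^ ((1-θ)^N) := ih (fun n => A (n+1)) (fun n => hA (n+1)) (fun n => hrec (n+1))
    have h0 : A 0 ≤ K * σ ^ θ * (A 1) ^ (1 - θ) := hrec 0
    have h2 : (A 1) ^ (1-θ) ≤ (K ^ (∑ j ∈ Finset.range N, (1-θ)^j) * σ ^ (1 - (1-θ)^N)
        * (A (N+1)) ^ ((1-θ)^N)) ^ (1-θ) :=
      Real.rpow_le_rpow (hA 1) h1 hβ0
    have key : A 0 ≤ K * σ ^ θ * (K ^ (∑ j ∈ Finset.range N, (1-θ)^j) * σ ^ (1 - (1-θ)^N)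
        * (A (N+1)) ^ ((1-θ)^N)) ^ (1-θ) := by
      refine h0.trans (mul_le_mul_of_nonneg_left h2 (by positivity))
    refine key.trans (le_of_eq ?_)
    rw [Real.mul_rpow (by positivity) (Real.rpow_nonneg (hA _) _),
        Real.mul_rpow (by positivity) (by positivity),
        ← Real.rpow_mul hK.le, ← Real.rpow_mul hσ.le, ← Real.rpow_mul (hA _)]
    rw [geom_sum_succ, Real.rpow_add hK, Real.rpow_one]
    have e2 : (1:ℝ) - (1-θ)^(N+1) = θ + (1 - (1-θ)^N) * (1-θ) := by
      rw [pow_succ]; ring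
    rw [e2, Real.rpow_add hσ, pow_succ]
    rw [mul_comm ((1-θ)) (∑ j ∈ Finset.range N, (1-θ)^j)]
    ring
    

/-- Finite-dimensional separation: if `b` is dominated in average by `S` against every
nonnegative weight, then `b` is dominated pointwise, up to `lam`, by a convex combination. -/
lemma key_sep {m : ℕ} (S : Set (Fin m → ℝ)) (hS0 : (0 : Fin m → ℝ) ∈ S)
    (hSnn : ∀ s ∈ S, ∀ k, 0 ≤ s k) (b : Fin m → ℝ) (hb : ∀ k, 0 ≤ b k)
    (hsep : ∀ τ : Fin m → ℝ, (∀ k, 0 ≤ τ k) → ∀ u₀ : ℝ,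
      (∀ s ∈ S, ∑ k, τ k * s k ≤ u₀) → ∑ k, τ k * b k ≤ u₀)
    {lam : ℝ} (hlam : 1 < lam) :
    ∃ d ∈ convexHull ℝ S, ∀ k, b k ≤ lam * d k := by
  classical
  set ρ : ℝ := Real.sqrt lam with hρdef
  have hρ1 : 1 < ρ := by
    rw [hρdef, show (1:ℝ) = Real.sqrt 1 by simp]
    exact Real.sqrt_lt_sqrt (by norm_num) hlam
  have hρ0 : 0 < ρ := lt_trans one_pos hρ1
  have hρρ : ρ * ρ = lam := Real.mul_self_sqrt (le_of_lt (lt_trans one_pos hlam))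
  have hρlam : ρ < lam := by nlinarith
  -- the downward closure of the convex hull
  set T : Set (Fin m → ℝ) := {y | ∃ d ∈ convexHull ℝ S, ∀ k, y k ≤ d k} with hT
  have hTconv : Convex ℝ T := by
    rintro y₁ ⟨d₁, hd₁, hy₁⟩ y₂ ⟨d₂, hd₂, hy₂⟩ a b' ha hb' hab
    exact ⟨a • d₁ + b' • d₂, (convex_convexHull ℝ S) hd₁ hd₂ ha hb' hab,
      fun k => by
        have := add_le_add (mul_le_mul_of_nonneg_left (hy₁ k) ha)
          (mul_le_mul_of_nonneg_left (hy₂ k) hb')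
        simpa using this⟩
  have hST : S ⊆ T := fun s hs => ⟨s, subset_convexHull ℝ S hs, fun k => le_rfl⟩
  -- the scaled-down `b` lies in the closure of `T`
  have hmem : ρ⁻¹ • b ∈ closure T := by
    by_contra hmemn
    obtain ⟨f, u, hfu, hux⟩ := geometric_hahn_banach_closed_point
      (hTconv.closure) isClosed_closure hmemn
    have hu0 : 0 < u := by
      have := hfu 0 (subset_closure (hST hS0))
      simpa using this
    set τ : Fin m → ℝ := fun k => f (fun j => if k = j then 1 else 0) with hτ
    have hfeq : ∀ y : Fin m → ℝ, f y = ∑ k, τ k * y k := by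
      intro y
      conv_lhs => rw [pi_eq_sum_univ y]
      rw [map_sum]
      exact Finset.sum_congr rfl fun k _ => by rw [map_smul, smul_eq_mul, mul_comm]
    have hτnn : ∀ k, 0 ≤ τ k := by
      intro k
      by_contra hneg
      push_neg at hneg
      set M : ℝ := (u + 1) / (-τ k) with hM
      have hM0 : 0 ≤ M := div_nonneg (by linarith) (by linarith)
      set ek : Fin m → ℝ := fun j => if k = j then 1 else 0 with hek
      have hmem2 : ((-M) • ek : Fin m → ℝ) ∈ T := by
        refine ⟨0, subset_convexHull ℝ S hS0, fun k' => ?_⟩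
        simp only [Pi.smul_apply, smul_eq_mul, hek, Pi.zero_apply]
        by_cases hkk : k = k'
        · subst hkk
          rw [if_pos rfl, mul_one]
          linarith
        · simp [hkk]
      have h1 := hfu _ (subset_closure hmem2)
      rw [map_smul, smul_eq_mul] at h1
      have h2 : -M * τ k = u + 1 := by
        rw [hM, neg_mul, div_mul_eq_mul_div, div_neg, neg_neg, mul_div_assoc,
          div_self (ne_of_lt hneg), mul_one]
      rw [show f ek = τ k from rfl] at h1
      rw [h2] at h1
      linarith
    have hbu : ∑ k, τ k * b k ≤ u := by
      refine hsep τ hτnn u fun s hs => ?_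
      have := hfu s (subset_closure (hST hs))
      rw [hfeq s] at this
      exact this.le
    have hsum_nn : 0 ≤ ∑ k, τ k * b k :=
      Finset.sum_nonneg fun k _ => mul_nonneg (hτnn k) (hb k)
    have hx : f (ρ⁻¹ • b) ≤ ∑ k, τ k * b k := by
      rw [map_smul, smul_eq_mul, hfeq b]
      calc ρ⁻¹ * ∑ k, τ k * b k ≤ 1 * ∑ k, τ k * b k := by
            apply mul_le_mul_of_nonneg_right _ hsum_nn
            rw [inv_le_one_iff₀]; right; exact hρ1.le
        _ = ∑ k, τ k * b k := one_mul _
    linarith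
  -- positivity on the hull
  have hhullnn : ∀ d ∈ convexHull ℝ S, ∀ k, 0 ≤ d k := by
    intro d hd k
    have hsub : convexHull ℝ S ⊆ {y : Fin m → ℝ | ∀ k, 0 ≤ y k} := by
      apply convexHull_min hSnn
      intro y hy z hz a b' ha hb' hab k'
      simp only [Pi.add_apply, Pi.smul_apply, smul_eq_mul]
      have := add_le_add (mul_nonneg ha (hy k')) (mul_nonneg hb' (hz k'))
      simpa using this
    exact hsub hd k
  -- extract an approximation and remove the epsilon
  by_cases hball : ∀ k, b k = 0
  · exact ⟨0, subset_convexHull ℝ S hS0, fun k => by rw [hball k]; simp⟩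
  push_neg at hball
  obtain ⟨k₀, hk₀⟩ := hball
  have hbk₀ : 0 < b k₀ := lt_of_le_of_ne (hb k₀) (Ne.symm hk₀)
  set Pos : Finset (Fin m) := Finset.univ.filter (fun k => 0 < b k) with hPos
  have hPosne : (Pos.image b).Nonempty :=
    ⟨b k₀, Finset.mem_image_of_mem b (by simp [hPos, hbk₀])⟩
  set β : ℝ := (Pos.image b).min' hPosne with hβ
  have hβpos : 0 < β := by
    obtain ⟨k, hk, hkb⟩ := Finset.mem_image.1 ((Pos.image b).min'_mem hPosne)
    rw [hβ, ← hkb]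
    exact (Finset.mem_filter.1 hk).2
  have hβle : ∀ k, 0 < b k → β ≤ b k := fun k hk =>
    Finset.min'_le _ _ (Finset.mem_image_of_mem b (by simp [hPos, hk]))
  have hεpos : 0 < β * (ρ⁻¹ - lam⁻¹) := by
    apply mul_pos hβpos
    have : lam⁻¹ < ρ⁻¹ := by
      apply inv_strictAnti₀ hρ0 hρlam
    linarith
  obtain ⟨y, hyT, hdist⟩ := Metric.mem_closure_iff.1 hmem _ hεpos
  obtain ⟨d, hd, hyd⟩ := hyT
  refine ⟨d, hd, fun k => ?_⟩
  rcases eq_or_lt_of_le (hb k) with h0 | hpos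
  · rw [← h0]
    exact mul_nonneg (by linarith) (hhullnn d hd k)
  · have hco : ρ⁻¹ * b k - y k < β * (ρ⁻¹ - lam⁻¹) :=
      lt_of_le_of_lt (le_trans (le_abs_self _)
        (by rw [← Real.dist_eq]; exact dist_le_pi_dist (ρ⁻¹ • b) y k)) hdist
    have h1 : ρ⁻¹ * b k - β * (ρ⁻¹ - lam⁻¹) ≤ d k := by
      have := hyd k; linarith
    have h2 : ρ⁻¹ * b k - b k * (ρ⁻¹ - lam⁻¹) ≤ d k := by
      have hββ : β ≤ b k := hβle k hpos
      have hfac : 0 ≤ ρ⁻¹ - lam⁻¹ := by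
        have : lam⁻¹ < ρ⁻¹ := inv_strictAnti₀ hρ0 hρlam
        linarith
      nlinarith
    have h3 : lam⁻¹ * b k ≤ d k := by
      have : ρ⁻¹ * b k - b k * (ρ⁻¹ - lam⁻¹) = lam⁻¹ * b k := by ring
      linarith
    calc b k = lam * (lam⁻¹ * b k) := by field_simp
      _ ≤ lam * d k := mul_le_mul_of_nonneg_left h3 (by linarith)


variable {Y : Type*} [NormedAddCommGroup Y] [NormedSpace 𝕜 Y]

/-- Discrete Pietsch domination with slack, for a finite set of points. -/
lemma discrete_pietsch {t : ℝ} (ht : 1 ≤ t)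
    {u : X →L[𝕜] Y} {C : ℝ} (hC : 0 ≤ C) (hu : PSummingWith 𝕜 t u C)
    {lam : ℝ} (hlam : 1 < lam) {m : ℕ} (z : Fin m → X) :
    ∃ (n : ℕ) (w : Fin n → ℝ) (ψ : Fin n → StrongDual 𝕜 X),
      (∀ i, 0 ≤ w i) ∧ (∑ i, w i) = 1 ∧ (∀ i, ‖ψ i‖ ≤ 1) ∧
      ∀ k, ‖u (z k)‖ ^ t ≤ lam * C ^ t * ∑ i, w i * ‖ψ i (z k)‖ ^ t := by
  classical
  have ht0 : (0:ℝ) < t := lt_of_lt_of_le one_pos ht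
  rcases eq_or_lt_of_le hC with hC0 | hCpos
  · -- C = 0 : trivial
    refine ⟨1, fun _ => 1, fun _ => 0, fun _ => zero_le_one, by simp, fun _ => by simp, fun k => ?_⟩
    have h0 : ‖u (z k)‖ ≤ 0 := by
      have := psw_single ht hC hu (z k)
      rw [← hC0] at this
      simpa using this
    have h0' : ‖u (z k)‖ = 0 := le_antisymm h0 (norm_nonneg _)
    rw [h0', ← hC0]
    simp [Real.zero_rpow ht0.ne']
  · -- C > 0
    set S : Set (Fin m → ℝ) := Set.range (fun φ : {φ : StrongDual 𝕜 X // ‖φ‖ ≤ 1} =>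
      fun k => C ^ t * ‖(φ : StrongDual 𝕜 X) (z k)‖ ^ t) with hS
    have hS0 : (0 : Fin m → ℝ) ∈ S := by
      refine ⟨⟨0, by simp⟩, ?_⟩
      funext k
      simp [Real.zero_rpow ht0.ne']
    have hSnn : ∀ s ∈ S, ∀ k, 0 ≤ s k := by
      rintro s ⟨φ, rfl⟩ k
      positivity
    set b : Fin m → ℝ := fun k => ‖u (z k)‖ ^ t with hbdef
    have hb : ∀ k, 0 ≤ b k := fun k => Real.rpow_nonneg (norm_nonneg _) _
    have hCt : (0:ℝ) < C ^ t := Real.rpow_pos_of_pos hCpos _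
    have hsep : ∀ τ : Fin m → ℝ, (∀ k, 0 ≤ τ k) → ∀ u₀ : ℝ,
        (∀ s ∈ S, ∑ k, τ k * s k ≤ u₀) → ∑ k, τ k * b k ≤ u₀ := by
      intro τ hτ u₀ hub
      have hu₀ : 0 ≤ u₀ := by
        have := hub 0 hS0
        simpa using this
      set x : Fin m → X := fun k => ((τ k ^ t⁻¹ : ℝ) : 𝕜) • z k with hx
      have hsc : ∀ k, ‖((τ k ^ t⁻¹ : ℝ) : 𝕜)‖ = τ k ^ t⁻¹ := fun k => by
        rw [RCLike.norm_ofReal, abs_of_nonneg (Real.rpow_nonneg (hτ k) _)]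
      have hnorm1 : ∀ k, ‖u (x k)‖ ^ t = τ k * ‖u (z k)‖ ^ t := by
        intro k
        rw [hx]
        simp only [map_smul, norm_smul, hsc]
        rw [Real.mul_rpow (Real.rpow_nonneg (hτ k) _) (norm_nonneg _),
          Real.rpow_inv_rpow (hτ k) ht0.ne']
      have hnorm2 : ∀ (φ : StrongDual 𝕜 X) k, ‖φ (x k)‖ ^ t = τ k * ‖φ (z k)‖ ^ t := by
        intro φ k
        rw [hx]
        simp only [map_smul, norm_smul, hsc]
        rw [Real.mul_rpow (Real.rpow_nonneg (hτ k) _) (norm_nonneg _),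
          Real.rpow_inv_rpow (hτ k) ht0.ne']
      have heval := psw_eval hu x
      rw [Finset.sum_congr rfl (fun k _ => hnorm1 k)] at heval
      have hsig : sig 𝕜 t x ≤ (u₀ / C ^ t) ^ (1/t) := by
        haveI : Nonempty {φ : StrongDual 𝕜 X // ‖φ‖ ≤ 1} := ⟨⟨0, by simp⟩⟩
        refine ciSup_le fun φ => ?_
        rw [Finset.sum_congr rfl (fun k _ => hnorm2 (φ : StrongDual 𝕜 X) k)]
        apply Real.rpow_le_rpow (Finset.sum_nonneg fun k _ =>
          mul_nonneg (hτ k) (Real.rpow_nonneg (norm_nonneg _) _)) ?_ (by positivity)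
        rw [le_div_iff₀ hCt]
        have := hub _ ⟨φ, rfl⟩
        calc (∑ k, τ k * ‖(φ : StrongDual 𝕜 X) (z k)‖ ^ t) * C ^ t
            = ∑ k, τ k * (C ^ t * ‖(φ : StrongDual 𝕜 X) (z k)‖ ^ t) := by
              rw [Finset.sum_mul]; exact Finset.sum_congr rfl fun k _ => by ring
          _ ≤ u₀ := this
      have hchain : (∑ k, τ k * ‖u (z k)‖ ^ t) ^ (1/t) ≤ u₀ ^ (1/t) := by
        refine heval.trans ?_
        calc C * sig 𝕜 t x ≤ C * (u₀ / C ^ t) ^ (1/t) :=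
              mul_le_mul_of_nonneg_left hsig hC
          _ = u₀ ^ (1/t) := by
              rw [Real.div_rpow hu₀ hCt.le, one_div, Real.rpow_rpow_inv hC ht0.ne',
                mul_div_assoc', mul_div_cancel_left₀ _ hCpos.ne']
      have hsnn : 0 ≤ ∑ k, τ k * ‖u (z k)‖ ^ t :=
        Finset.sum_nonneg fun k _ => mul_nonneg (hτ k) (Real.rpow_nonneg (norm_nonneg _) _)
      have := Real.rpow_le_rpow (Real.rpow_nonneg hsnn _) hchain (by positivity : (0:ℝ) ≤ t)
      rwa [one_div, Real.rpow_inv_rpow (Finset.sum_nonneg fun k _ =>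
          mul_nonneg (hτ k) (Real.rpow_nonneg (norm_nonneg _) _)) ht0.ne',
        Real.rpow_inv_rpow hu₀ ht0.ne'] at this
    obtain ⟨d, hd, hbd⟩ := key_sep S hS0 hSnn b hb hsep hlam
    rw [mem_convexHull_iff_exists_fintype] at hd
    obtain ⟨ι, hι, w, zs, hw, hwsum, hzs, hdsum⟩ := hd
    have hφ : ∀ i : ι, ∃ φ : {φ : StrongDual 𝕜 X // ‖φ‖ ≤ 1},
        zs i = fun k => C ^ t * ‖(φ : StrongDual 𝕜 X) (z k)‖ ^ t := by
      intro i
      obtain ⟨φ, hφ⟩ := hzs i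
      exact ⟨φ, hφ.symm⟩
    choose φs hφs using hφ
    set e := (Fintype.equivFin ι).symm with he
    refine ⟨Fintype.card ι, fun j => w (e j), fun j => (φs (e j) : StrongDual 𝕜 X),
      fun j => hw (e j), ?_, fun j => (φs (e j)).2, ?_⟩
    · rw [Equiv.sum_comp e w]; exact hwsum
    · intro k
      have hdk : d k = ∑ i : ι, w i * (C ^ t * ‖(φs i : StrongDual 𝕜 X) (z k)‖ ^ t) := by
        rw [← hdsum]
        rw [Finset.sum_apply]
        exact Finset.sum_congr rfl fun i _ => by rw [Pi.smul_apply, smul_eq_mul, hφs i]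
      have := hbd k
      rw [hdk] at this
      refine this.trans (le_of_eq ?_)
      rw [← Equiv.sum_comp e (fun i => w i * (C ^ t * ‖(φs i : StrongDual 𝕜 X) (z k)‖ ^ t))]
      rw [Finset.mul_sum, Finset.mul_sum]
      exact Finset.sum_congr rfl fun j _ => by ring


lemma norm_sum_lp_single {p : ℝ} (hp : 0 < p) [Fact (1 ≤ ENNReal.ofReal p)] {n : ℕ}
    (g : Fin n → ℕ) (hg : Function.Injective g) (a : Fin n → 𝕜) :
    ‖(∑ i, lp.single (ENNReal.ofReal p) (g i) (a i) :
        lp (fun _ : ℕ => 𝕜) (ENNReal.ofReal p))‖ = (∑ i, ‖a i‖ ^ p) ^ (1/p) := by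
  classical
  have htr : (ENNReal.ofReal p).toReal = p := ENNReal.toReal_ofReal hp.le
  have hp' : 0 < (ENNReal.ofReal p).toReal := by rw [htr]; exact hp
  set F : lp (fun _ : ℕ => 𝕜) (ENNReal.ofReal p) :=
    ∑ i, lp.single (ENNReal.ofReal p) (g i) (a i) with hF
  rw [lp.norm_eq_tsum_rpow hp']
  have hcoord : ∀ j : ℕ, (F : ∀ _ : ℕ, 𝕜) j = ∑ i, if j = g i then a i else 0 := by
    intro j
    rw [hF, lp.coeFn_sum, Finset.sum_apply]
    refine Finset.sum_congr rfl fun i _ => ?_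
    rw [lp.single_apply]
    split <;> simp_all
  have hsupp : ∀ j ∉ Finset.image g Finset.univ,
      ‖(F : ∀ _ : ℕ, 𝕜) j‖ ^ (ENNReal.ofReal p).toReal = 0 := by
    intro j hj
    have hz : (F : ∀ _ : ℕ, 𝕜) j = 0 := by
      rw [hcoord j]
      refine Finset.sum_eq_zero fun i _ => if_neg fun hji => ?_
      exact hj (hji ▸ Finset.mem_image_of_mem g (Finset.mem_univ i))
    rw [hz, norm_zero, Real.zero_rpow hp'.ne']
  have htsum : ∑' j : ℕ, ‖(F : ∀ _ : ℕ, 𝕜) j‖ ^ (ENNReal.ofReal p).toReal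
      = ∑ j ∈ Finset.image g Finset.univ, ‖(F : ∀ _ : ℕ, 𝕜) j‖ ^ (ENNReal.ofReal p).toReal :=
    tsum_eq_sum hsupp
  rw [htsum, Finset.sum_image (fun i _ i' _ h => hg h)]
  rw [htr]
  congr 1
  refine Finset.sum_congr rfl fun i _ => ?_
  congr 1
  rw [hcoord (g i)]
  rw [Finset.sum_eq_single i (fun i' _ hi' => if_neg fun h => hi' (hg h.symm))
    (fun h => absurd (Finset.mem_univ i) h)]
  rw [if_pos rfl]

variable (𝕜) in
/-- A finitely supported "discrete Pietsch measure" on the dual unit ball. -/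
structure DM (X : Type*) [NormedAddCommGroup X] [NormedSpace 𝕜 X] where
  n : ℕ
  w : Fin n → ℝ
  ψ : Fin n → StrongDual 𝕜 X
  hw : ∀ i, 0 ≤ w i
  hsum : ∑ i, w i = 1
  hψ : ∀ i, ‖ψ i‖ ≤ 1

/-- `(∑ᵢ wᵢ ‖ψᵢ x‖^t)^(1/t)`. -/
def NP (t : ℝ) (μ : DM 𝕜 X) (x : X) : ℝ := (∑ i, μ.w i * ‖μ.ψ i x‖ ^ t) ^ (1/t)

/-- `∑ᵢ wᵢ ‖ψᵢ x‖`. -/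
def N1 (μ : DM 𝕜 X) (x : X) : ℝ := ∑ i, μ.w i * ‖μ.ψ i x‖

lemma NP_sum_nonneg (t : ℝ) (μ : DM 𝕜 X) (x : X) : 0 ≤ ∑ i, μ.w i * ‖μ.ψ i x‖ ^ t :=
  Finset.sum_nonneg fun i _ => mul_nonneg (μ.hw i) (Real.rpow_nonneg (norm_nonneg _) _)

lemma NP_nonneg (t : ℝ) (μ : DM 𝕜 X) (x : X) : 0 ≤ NP t μ x :=
  Real.rpow_nonneg (NP_sum_nonneg t μ x) _

lemma N1_nonneg (μ : DM 𝕜 X) (x : X) : 0 ≤ N1 μ x :=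
  Finset.sum_nonneg fun i _ => mul_nonneg (μ.hw i) (norm_nonneg _)

lemma NP_rpow (t : ℝ) (ht : 0 < t) (μ : DM 𝕜 X) (x : X) :
    NP t μ x ^ t = ∑ i, μ.w i * ‖μ.ψ i x‖ ^ t := by
  rw [NP, one_div, Real.rpow_inv_rpow (NP_sum_nonneg t μ x) ht.ne']

lemma dual_norm_le (μ : DM 𝕜 X) (i : Fin μ.n) (x : X) : ‖μ.ψ i x‖ ≤ ‖x‖ := by
  calc ‖μ.ψ i x‖ ≤ ‖μ.ψ i‖ * ‖x‖ := (μ.ψ i).le_opNorm x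
    _ ≤ 1 * ‖x‖ := mul_le_mul_of_nonneg_right (μ.hψ i) (norm_nonneg _)
    _ = ‖x‖ := one_mul _

lemma NP_le_norm (t : ℝ) (ht : 0 < t) (μ : DM 𝕜 X) (x : X) : NP t μ x ≤ ‖x‖ := by
  have h1 : ∑ i, μ.w i * ‖μ.ψ i x‖ ^ t ≤ ‖x‖ ^ t := by
    calc ∑ i, μ.w i * ‖μ.ψ i x‖ ^ t ≤ ∑ i, μ.w i * ‖x‖ ^ t := by
          refine Finset.sum_le_sum fun i _ => mul_le_mul_of_nonneg_left ?_ (μ.hw i)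
          exact Real.rpow_le_rpow (norm_nonneg _) (dual_norm_le μ i x) ht.le
      _ = ‖x‖ ^ t := by rw [← Finset.sum_mul, μ.hsum, one_mul]
  calc NP t μ x ≤ (‖x‖ ^ t) ^ (1/t) :=
        Real.rpow_le_rpow (NP_sum_nonneg t μ x) h1 (by positivity)
    _ = ‖x‖ := by rw [one_div, Real.rpow_rpow_inv (norm_nonneg _) ht.ne']

/-- The canonical operator `X → ℓ_p` associated with a discrete measure. -/
def measOp (p : ℝ) [Fact (1 ≤ ENNReal.ofReal p)] (μ : DM 𝕜 X) :
    X →L[𝕜] lp (fun _ : ℕ => 𝕜) (ENNReal.ofReal p) :=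
  ∑ i, (((μ.w i ^ (1/p) : ℝ) : 𝕜) • μ.ψ i).smulRight
    (lp.single (ENNReal.ofReal p) (i : ℕ) (1 : 𝕜))

lemma measOp_norm (p : ℝ) (hp : 0 < p) [Fact (1 ≤ ENNReal.ofReal p)] (μ : DM 𝕜 X) (x : X) :
    ‖measOp p μ x‖ = NP p μ x := by
  have h1 : measOp p μ x = ∑ i, lp.single (ENNReal.ofReal p) ((i : Fin μ.n) : ℕ)
      ((((μ.w i ^ (1/p) : ℝ)) : 𝕜) * μ.ψ i x) := by
    rw [measOp, ContinuousLinearMap.sum_apply]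
    refine Finset.sum_congr rfl fun i _ => ?_
    rw [ContinuousLinearMap.smulRight_apply, ContinuousLinearMap.smul_apply, smul_eq_mul,
      ← lp.single_smul, smul_eq_mul, mul_one]
  have h2 := norm_sum_lp_single (𝕜 := 𝕜) hp (g := fun i : Fin μ.n => (i : ℕ))
    (fun a b h => Fin.val_injective h)
    (fun i => (((μ.w i ^ (1/p) : ℝ)) : 𝕜) * μ.ψ i x)
  rw [h1, h2]
  rw [NP]
  congr 1
  refine Finset.sum_congr rfl fun i _ => ?_
  rw [norm_mul, RCLike.norm_ofReal, abs_of_nonneg (Real.rpow_nonneg (μ.hw i) _),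
    Real.mul_rpow (Real.rpow_nonneg (μ.hw i) _) (norm_nonneg _), one_div,
    Real.rpow_inv_rpow (μ.hw i) hp.ne']

lemma measOp_psw (p : ℝ) (hp : 0 < p) [Fact (1 ≤ ENNReal.ofReal p)] (μ : DM 𝕜 X) :
    PSummingWith 𝕜 p (measOp p μ) 1 := by
  intro m z
  have h1 : ∀ k, ‖measOp p μ (z k)‖ ^ p = ∑ i, μ.w i * ‖μ.ψ i (z k)‖ ^ p := by
    intro k
    rw [measOp_norm p hp μ (z k), NP_rpow p hp]
  have h2 : ∑ k, ‖measOp p μ (z k)‖ ^ p ≤ (sig 𝕜 p z) ^ p := by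
    rw [Finset.sum_congr rfl fun k _ => h1 k, Finset.sum_comm]
    calc ∑ i, ∑ k, μ.w i * ‖μ.ψ i (z k)‖ ^ p
        = ∑ i, μ.w i * ∑ k, ‖μ.ψ i (z k)‖ ^ p := by
          exact Finset.sum_congr rfl fun i _ => by rw [Finset.mul_sum]
      _ ≤ ∑ i, μ.w i * (sig 𝕜 p z) ^ p := by
          refine Finset.sum_le_sum fun i _ => mul_le_mul_of_nonneg_left ?_ (μ.hw i)
          exact sum_le_sig_rpow p hp z (μ.ψ i) (μ.hψ i)
      _ = (sig 𝕜 p z) ^ p := by rw [← Finset.sum_mul, μ.hsum, one_mul]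
  calc (∑ k, ‖measOp p μ (z k)‖ ^ p) ^ (1/p)
      ≤ ((sig 𝕜 p z) ^ p) ^ (1/p) := by
        refine Real.rpow_le_rpow ?_ h2 (by positivity)
        exact Finset.sum_nonneg fun k _ => Real.rpow_nonneg (norm_nonneg _) _
    _ = sig 𝕜 p z := by rw [one_div, Real.rpow_rpow_inv (sig_nonneg p hp z) hp.ne']
    _ = 1 * sig 𝕜 p z := (one_mul _).symm

/-- Interpolation: `NP r ≤ N1^θ · (NP p)^(1-θ)`. -/
lemma NP_interp {p r θ : ℝ} (hr : 1 < r) (hrp : r < p) (hθ0 : 0 < θ) (hθ1 : θ < 1)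
    (hθeq : 1 / r = θ + (1 - θ) / p) (μ : DM 𝕜 X) (x : X) :
    NP r μ x ≤ (N1 μ x) ^ θ * (NP p μ x) ^ (1 - θ) := by
  have hr0 : (0:ℝ) < r := lt_trans one_pos hr
  have hp0 : (0:ℝ) < p := lt_trans hr0 hrp
  set α : ℝ := θ * r with hα
  have hα0 : 0 < α := mul_pos hθ0 hr0
  have hkey : 1 - α = (1 - θ) * r / p := by
    have h3 : r * (1/r) = r * (θ + (1 - θ)/p) := by rw [hθeq]
    rw [mul_one_div, div_self hr0.ne'] at h3
    have h2 : θ * r + (1 - θ) * r / p = 1 := by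
      calc θ * r + (1 - θ) * r / p = r * (θ + (1 - θ)/p) := by ring
        _ = 1 := h3.symm
    rw [hα]; linarith
  have hα1 : α < 1 := by
    have h2 : 0 < (1 - θ) * r / p := div_pos (mul_pos (by linarith) hr0) hp0
    linarith [hkey]
  have hexp : α + p * (1 - α) = r := by
    rw [hkey]
    field_simp
    ring
  have hpw : ∀ i, (μ.w i * ‖μ.ψ i x‖) ^ α * (μ.w i * ‖μ.ψ i x‖ ^ p) ^ (1 - α)
      = μ.w i * ‖μ.ψ i x‖ ^ r := by
    intro i
    set a := ‖μ.ψ i x‖ with ha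
    have ha0 : (0:ℝ) ≤ a := norm_nonneg _
    rw [Real.mul_rpow (μ.hw i) ha0, Real.mul_rpow (μ.hw i) (Real.rpow_nonneg ha0 _),
      ← Real.rpow_mul ha0]
    calc μ.w i ^ α * a ^ α * (μ.w i ^ (1-α) * a ^ (p * (1-α)))
        = (μ.w i ^ α * μ.w i ^ (1-α)) * (a ^ α * a ^ (p * (1-α))) := by ring
      _ = μ.w i * a ^ r := by
          rw [← Real.rpow_add' (μ.hw i) (by norm_num : α + (1-α) ≠ 0),
            ← Real.rpow_add' ha0 (by rw [hexp]; exact hr0.ne')]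
          rw [show α + (1-α) = (1:ℝ) by ring, Real.rpow_one, hexp]
  have hhold := sum_hoelder (fun i => μ.w i * ‖μ.ψ i x‖) (fun i => μ.w i * ‖μ.ψ i x‖ ^ p)
    (fun i => mul_nonneg (μ.hw i) (norm_nonneg _))
    (fun i => mul_nonneg (μ.hw i) (Real.rpow_nonneg (norm_nonneg _) _)) hα0 hα1
  rw [Finset.sum_congr rfl (fun i _ => hpw i)] at hhold
  have hNPle : NP r μ x ≤ ((N1 μ x) ^ α * (∑ i, μ.w i * ‖μ.ψ i x‖ ^ p) ^ (1-α)) ^ (1/r) := by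
    rw [NP]
    exact Real.rpow_le_rpow (NP_sum_nonneg r μ x) hhold (by positivity)
  have hsp : (0:ℝ) ≤ ∑ i, μ.w i * ‖μ.ψ i x‖ ^ p := NP_sum_nonneg p μ x
  have e1 : α * (1/r) = θ := by rw [hα]; field_simp
  have e2 : (1 - α) * (1/r) = (1/p) * (1 - θ) := by
    rw [hkey]; field_simp
  calc NP r μ x ≤ ((N1 μ x) ^ α * (∑ i, μ.w i * ‖μ.ψ i x‖ ^ p) ^ (1-α)) ^ (1/r) := hNPle
    _ = (N1 μ x) ^ (α * (1/r)) * (∑ i, μ.w i * ‖μ.ψ i x‖ ^ p) ^ ((1-α) * (1/r)) := by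
        rw [Real.mul_rpow (Real.rpow_nonneg (N1_nonneg μ x) _) (Real.rpow_nonneg hsp _),
          ← Real.rpow_mul (N1_nonneg μ x), ← Real.rpow_mul hsp]
    _ = (N1 μ x) ^ θ * (NP p μ x) ^ (1 - θ) := by
        rw [e1, e2, NP, Real.rpow_mul hsp]


lemma sumN1_le_sig (μ : DM 𝕜 X) {m : ℕ} (x : Fin m → X) :
    ∑ k, N1 μ (x k) ≤ sig 𝕜 1 x := by
  have hper : ∀ i : Fin μ.n, ∑ k, ‖μ.ψ i (x k)‖ ≤ sig 𝕜 1 x := by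
    intro i
    have := le_sig (𝕜 := 𝕜) 1 zero_le_one x (μ.ψ i) (μ.hψ i)
    simpa using this
  calc ∑ k, N1 μ (x k) = ∑ i, μ.w i * ∑ k, ‖μ.ψ i (x k)‖ := by
        simp only [N1]
        rw [Finset.sum_comm]
        exact Finset.sum_congr rfl fun i _ => by rw [Finset.mul_sum]
    _ ≤ ∑ i, μ.w i * sig 𝕜 1 x := Finset.sum_le_sum fun i _ =>
        mul_le_mul_of_nonneg_left (hper i) (μ.hw i)
    _ = sig 𝕜 1 x := by rw [← Finset.sum_mul, μ.hsum, one_mul]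

lemma root_form {t aa D E NN : ℝ} (ht : 1 ≤ t) (ha : 0 ≤ aa) (hD : 1 ≤ D) (hE : 0 ≤ E)
    (hN : 0 ≤ NN) (hb : aa ^ t ≤ D * E ^ t * NN ^ t) : aa ≤ D * E * NN := by
  have ht0 : (0:ℝ) < t := lt_of_lt_of_le one_pos ht
  have h1 : aa = (aa ^ t) ^ (1/t) := by rw [one_div, Real.rpow_rpow_inv ha ht0.ne']
  rw [h1]
  calc (aa ^ t) ^ (1/t) ≤ (D * E ^ t * NN ^ t) ^ (1/t) :=
        Real.rpow_le_rpow (Real.rpow_nonneg ha t) hb (by positivity)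
    _ = D ^ (1/t) * E * NN := by
        rw [Real.mul_rpow (mul_nonneg (by linarith) (Real.rpow_nonneg hE t))
            (Real.rpow_nonneg hN t),
          Real.mul_rpow (by linarith : (0:ℝ) ≤ D) (Real.rpow_nonneg hE t), one_div,
          Real.rpow_rpow_inv hE ht0.ne', Real.rpow_rpow_inv hN ht0.ne']
    _ ≤ D * E * NN := by
        have hD1 : D ^ (1/t) ≤ D := by
          calc D ^ (1/t) ≤ D ^ (1:ℝ) := Real.rpow_le_rpow_of_exponent_le hD
                (by rw [div_le_one ht0]; exact ht)
            _ = D := Real.rpow_one D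
        exact mul_le_mul_of_nonneg_right (mul_le_mul_of_nonneg_right hD1 hE) hN


set_option maxHeartbeats 1000000 in
lemma main_claim (p r θ : ℝ) (hr : 1 < r) (hrp : r < p) [Fact (1 ≤ ENNReal.ofReal p)]
    (hθ0 : 0 < θ) (hθ1 : θ < 1) (hθeq : 1 / r = θ + (1 - θ) / p)
    {c : ℝ} (hc : 0 < c)
    (hyp : ∀ v : X →L[𝕜] lp (fun _ : ℕ => 𝕜) (ENNReal.ofReal p),
      PSumming 𝕜 p v → PSumming 𝕜 r v ∧ piNorm 𝕜 r v ≤ c * piNorm 𝕜 p v)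
    (h : X →L[𝕜] Y) {C : ℝ} (hC0 : 0 ≤ C) (hCw : PSummingWith 𝕜 p h C) :
    PSummingWith 𝕜 1 h (2 * (2 * c) ^ (1 / θ) * C) := by
  classical
  have hr0 : (0:ℝ) < r := lt_trans one_pos hr
  have hp0 : (0:ℝ) < p := lt_trans hr0 hrp
  have hp1 : (1:ℝ) ≤ p := le_of_lt (lt_trans hr hrp)
  have hθne : θ ≠ 0 := hθ0.ne'
  intro m x
  simp only [Real.rpow_one, one_div_one]
  have hσeq : sig 𝕜 1 x = ⨆ φ : {φ : StrongDual 𝕜 X // ‖φ‖ ≤ 1},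
      ∑ j, ‖(φ : StrongDual 𝕜 X) (x j)‖ := by
    rw [sig]
    exact iSup_congr fun φ => by simp
  rw [← hσeq]
  set σ : ℝ := sig 𝕜 1 x with hσdef
  have hσ0 : 0 ≤ σ := sig_nonneg 1 one_pos x
  have h1θ : (0:ℝ) ≤ 1/θ := div_nonneg zero_le_one hθ0.le
  have hcoef : (0:ℝ) ≤ 2 * (2 * c) ^ (1 / θ) * C := by positivity
  by_cases hx0 : ∀ j, x j = 0
  · have hz : ∑ j, ‖h (x j)‖ = 0 :=
      Finset.sum_eq_zero fun j _ => by rw [hx0 j, map_zero, norm_zero]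
    rw [hz]
    exact mul_nonneg hcoef hσ0
  push_neg at hx0
  obtain ⟨j₀, hj₀⟩ := hx0
  obtain ⟨g, hg1, hgx⟩ := exists_dual_vector 𝕜 (x j₀) (norm_ne_zero_iff.2 hj₀)
  have hgn : ‖g (x j₀)‖ = ‖x j₀‖ := by
    rw [hgx, norm_algebraMap']
    exact norm_norm (x j₀)
  have hσpos : 0 < σ := by
    have h1 : ∑ j, ‖g (x j)‖ ≤ σ := by
      have := le_sig (𝕜 := 𝕜) 1 zero_le_one x g (le_of_eq hg1)
      simpa using this
    have h2 : ‖x j₀‖ ≤ ∑ j, ‖g (x j)‖ := by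
      rw [← hgn]
      exact Finset.single_le_sum (fun j _ => norm_nonneg (g (x j))) (Finset.mem_univ j₀)
    have h3 : 0 < ‖x j₀‖ := norm_pos_iff.2 hj₀
    linarith
  set G : ℝ := ∑ j, ‖x j‖ with hG
  have hGpos : 0 < G := by
    have h2 : ‖x j₀‖ ≤ G := Finset.single_le_sum (fun j _ => norm_nonneg _) (Finset.mem_univ j₀)
    have h3 : 0 < ‖x j₀‖ := norm_pos_iff.2 hj₀
    linarith
  rcases eq_or_lt_of_le hC0 with hCz | hCpos
  · -- C = 0
    have hzz : ∀ j, ‖h (x j)‖ ≤ 0 := by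
      intro j
      have := psw_single hp1 hC0 hCw (x j)
      rw [← hCz, zero_mul] at this
      exact this
    have hz : ∑ j, ‖h (x j)‖ ≤ 0 := Finset.sum_nonpos fun j _ => hzz j
    have : (0:ℝ) ≤ 2 * (2 * c) ^ (1 / θ) * C * σ := mul_nonneg hcoef hσ0
    linarith
  -- main case : C > 0
  set η : ℝ := (2:ℝ) ^ (θ/(θ+2)) with hηdef
  have hη1 : 1 < η := by
    rw [hηdef, Real.one_lt_rpow_iff_of_pos (by norm_num)]
    exact Or.inl ⟨one_lt_two, by positivity⟩
  have hη0 : 0 < η := lt_trans one_pos hη1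
  have hηpow : η ^ ((θ+2)/θ) = 2 := by
    rw [hηdef, ← Real.rpow_mul (by norm_num : (0:ℝ) ≤ 2),
      show (θ/(θ+2)) * ((θ+2)/θ) = 1 by field_simp, Real.rpow_one]
  -- initial Pietsch measure for h
  obtain ⟨n₀, w₀, ψ₀, hw₀, hsum₀, hψ₀, hdom₀⟩ := discrete_pietsch hp1 hC0 hCw hη1 x
  set μ₀ : DM 𝕜 X := ⟨n₀, w₀, ψ₀, hw₀, hsum₀, hψ₀⟩ with hμ₀
  have hpt₀ : ∀ k, ‖h (x k)‖ ≤ η * C * NP p μ₀ (x k) := by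
    intro k
    refine root_form hp1 (norm_nonneg _) hη1.le hC0 (NP_nonneg p μ₀ (x k)) ?_
    have h2 : ‖h (x k)‖ ^ p ≤ η * C ^ p * ∑ i, μ₀.w i * ‖μ₀.ψ i (x k)‖ ^ p := hdom₀ k
    rwa [← NP_rpow p hp0] at h2
  -- the chain step
  have hstep : ∀ μ : DM 𝕜 X, ∃ μ' : DM 𝕜 X, ∀ k,
      NP p μ (x k) ≤ (η * (c * η)) * ((N1 μ' (x k)) ^ θ * (NP p μ' (x k)) ^ (1-θ)) := by
    intro μ
    set v := measOp (𝕜 := 𝕜) p μ with hv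
    have hv1 : PSummingWith 𝕜 p v 1 := measOp_psw p hp0 μ
    have hvs : PSumming 𝕜 p v := ⟨1, zero_le_one, hv1⟩
    obtain ⟨hvr, hvle⟩ := hyp v hvs
    have hπp : piNorm 𝕜 p v ≤ 1 := piNorm_le zero_le_one hv1
    have hπr : piNorm 𝕜 r v ≤ c := by
      refine hvle.trans ?_
      calc c * piNorm 𝕜 p v ≤ c * 1 := mul_le_mul_of_nonneg_left hπp hc.le
        _ = c := mul_one c
    have hwr : PSummingWith 𝕜 r v (c * η) :=
      psw_of_lt hr0 hvr (lt_of_le_of_lt hπr (lt_mul_of_one_lt_right hc hη1))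
    obtain ⟨n', w', ψ', hw', hsum', hψ', hdom'⟩ :=
      discrete_pietsch hr.le (by positivity) hwr hη1 x
    set μ' : DM 𝕜 X := ⟨n', w', ψ', hw', hsum', hψ'⟩ with hμ'
    refine ⟨μ', fun k => ?_⟩
    have hb : ‖v (x k)‖ ^ r ≤ η * (c*η) ^ r * (NP r μ' (x k)) ^ r := by
      have h2 : ‖v (x k)‖ ^ r ≤ η * (c*η) ^ r * ∑ i, μ'.w i * ‖μ'.ψ i (x k)‖ ^ r := hdom' k
      rwa [← NP_rpow r hr0] at h2
    have hroot : ‖v (x k)‖ ≤ η * (c*η) * NP r μ' (x k) :=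
      root_form hr.le (norm_nonneg _) hη1.le (by positivity) (NP_nonneg r μ' (x k)) hb
    have hnorm : ‖v (x k)‖ = NP p μ (x k) := measOp_norm p hp0 μ (x k)
    have hint := NP_interp hr hrp hθ0 hθ1 hθeq μ' (x k)
    calc NP p μ (x k) = ‖v (x k)‖ := hnorm.symm
      _ ≤ η * (c*η) * NP r μ' (x k) := hroot
      _ ≤ η * (c*η) * ((N1 μ' (x k)) ^ θ * (NP p μ' (x k)) ^ (1-θ)) :=
          mul_le_mul_of_nonneg_left hint (by positivity)
  choose step hstep' using hstep
  set μseq : ℕ → DM 𝕜 X := fun n => step^[n] μ₀ with hμseq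
  have hseqsucc : ∀ n, μseq (n+1) = step (μseq n) := fun n =>
    Function.iterate_succ_apply' step n μ₀
  set K : ℝ := η * (c * η) with hKdef
  have hK0 : 0 < K := by positivity
  set A : ℕ → ℝ := fun n => ∑ k, NP p (μseq n) (x k) with hA
  have hA0 : ∀ n, 0 ≤ A n := fun n =>
    Finset.sum_nonneg fun k _ => NP_nonneg p (μseq n) (x k)
  have hAG : ∀ n, A n ≤ G := fun n =>
    Finset.sum_le_sum fun k _ => NP_le_norm p hp0 (μseq n) (x k)
  have hrecA : ∀ n, A n ≤ K * σ ^ θ * (A (n+1)) ^ (1-θ) := by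
    intro n
    have h1 : A n ≤ K * ∑ k, (N1 (μseq (n+1)) (x k)) ^ θ * (NP p (μseq (n+1)) (x k)) ^ (1-θ) := by
      rw [hA, Finset.mul_sum]
      refine Finset.sum_le_sum fun k _ => ?_
      rw [hseqsucc n]
      exact hstep' (μseq n) k
    have h2 := sum_hoelder (fun k => N1 (μseq (n+1)) (x k)) (fun k => NP p (μseq (n+1)) (x k))
      (fun k => N1_nonneg _ _) (fun k => NP_nonneg _ _ _) hθ0 hθ1
    have h3 : (∑ k, N1 (μseq (n+1)) (x k)) ^ θ ≤ σ ^ θ :=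
      Real.rpow_le_rpow (Finset.sum_nonneg fun k _ => N1_nonneg _ _)
        (sumN1_le_sig (μseq (n+1)) x) hθ0.le
    calc A n ≤ K * ∑ k, (N1 (μseq (n+1)) (x k)) ^ θ * (NP p (μseq (n+1)) (x k)) ^ (1-θ) := h1
      _ ≤ K * ((∑ k, N1 (μseq (n+1)) (x k)) ^ θ * (∑ k, NP p (μseq (n+1)) (x k)) ^ (1-θ)) :=
          mul_le_mul_of_nonneg_left h2 hK0.le
      _ ≤ K * (σ ^ θ * (A (n+1)) ^ (1-θ)) := by
          refine mul_le_mul_of_nonneg_left ?_ hK0.le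
          exact mul_le_mul_of_nonneg_right h3
            (Real.rpow_nonneg (Finset.sum_nonneg fun k _ => NP_nonneg _ _ _) _)
      _ = K * σ ^ θ * (A (n+1)) ^ (1-θ) := by ring
  -- choose N
  set k1 : ℝ := K ^ (1/θ) with hk1def
  have hk10 : 0 < k1 := Real.rpow_pos_of_pos hK0 _
  set D : ℝ := G / (k1 * σ) with hDdef
  have hD0 : 0 < D := div_pos hGpos (by positivity)
  have h2θ : (1:ℝ) < 2 ^ (1/θ) := by
    rw [Real.one_lt_rpow_iff_of_pos (by norm_num)]
    exact Or.inl ⟨one_lt_two, by positivity⟩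
  have htend : Filter.Tendsto (fun N : ℕ => D ^ ((1-θ)^N : ℝ)) Filter.atTop (nhds 1) := by
    have hlim : Filter.Tendsto (fun N : ℕ => ((1-θ)^N : ℝ)) Filter.atTop (nhds 0) :=
      tendsto_pow_atTop_nhds_zero_of_lt_one (by linarith) (by linarith)
    have := Filter.Tendsto.rpow (tendsto_const_nhds (x := D) (f := Filter.atTop)) hlim
      (Or.inl hD0.ne')
    simpa [Real.rpow_zero] using this
  obtain ⟨N, hN⟩ := (htend.eventually_lt_const h2θ).exists
  set ε : ℝ := ((1-θ)^N : ℝ) with hεdef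
  have hε0 : (0:ℝ) ≤ ε := by rw [hεdef]; exact pow_nonneg (by linarith) N
  have hiter := iteration_bound hK0 hσpos hθ0 hθ1 N A hA0 hrecA
  have hgeo : (∑ j ∈ Finset.range N, (1-θ)^j : ℝ) = 1/θ - ε/θ := by
    rw [geom_sum_eq (by intro hcon; rw [show (1:ℝ)-θ = 1 ↔ θ = 0 by constructor <;> intro <;> linarith] at hcon; exact hθne hcon)]
    rw [hεdef, show (1:ℝ) - θ - 1 = -θ by ring, div_neg, sub_div, neg_sub]
  rw [hgeo] at hiter
  have hANG : (A N) ^ ε ≤ G ^ ε := Real.rpow_le_rpow (hA0 N) (hAG N) hε0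
  have hA0bound : A 0 ≤ K ^ (1/θ - ε/θ) * σ ^ (1-ε) * G ^ ε := by
    refine hiter.trans ?_
    rw [mul_assoc, mul_assoc]
    refine mul_le_mul_of_nonneg_left ?_ (Real.rpow_nonneg hK0.le _)
    exact mul_le_mul_of_nonneg_left hANG (Real.rpow_nonneg hσpos.le _)
  have hkε : (0:ℝ) < k1 ^ ε := Real.rpow_pos_of_pos hk10 _
  have hσε : (0:ℝ) < σ ^ ε := Real.rpow_pos_of_pos hσpos _
  have heq : η * C * (K ^ (1/θ - ε/θ) * σ ^ (1-ε) * G ^ ε)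
      = (η * k1) * D ^ ε * (C * σ) := by
    rw [Real.rpow_sub hK0, Real.rpow_sub hσpos, Real.rpow_one,
      show ε/θ = (1/θ)*ε by ring, Real.rpow_mul hK0.le, ← hk1def,
      hDdef, Real.div_rpow hGpos.le (by positivity),
      Real.mul_rpow hk10.le hσpos.le]
    field_simp
  have hηk1 : η * k1 = 2 * c ^ (1/θ) := by
    have e1 : k1 = η ^ (2*(1/θ)) * c ^ (1/θ) := by
      rw [hk1def, hKdef, show η * (c * η) = η^2 * c by ring,
        Real.mul_rpow (sq_nonneg η) hc.le, ← Real.rpow_natCast η 2,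
        ← Real.rpow_mul hη0.le]
      norm_num
    rw [e1, ← mul_assoc, show η * η ^ (2*(1/θ)) = η ^ ((1:ℝ) + 2*(1/θ)) by
        rw [Real.rpow_add hη0, Real.rpow_one],
      show (1:ℝ) + 2*(1/θ) = (θ+2)/θ by rw [add_div, div_self hθne, mul_one_div], hηpow]
  calc ∑ k, ‖h (x k)‖ ≤ ∑ k, η * C * NP p μ₀ (x k) :=
        Finset.sum_le_sum fun k _ => hpt₀ k
    _ = η * C * A 0 := by rw [hA, Finset.mul_sum]; rfl
    _ ≤ η * C * (K ^ (1/θ - ε/θ) * σ ^ (1-ε) * G ^ ε) :=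
        mul_le_mul_of_nonneg_left hA0bound (by positivity)
    _ = (η * k1) * D ^ ε * (C * σ) := heq
    _ = 2 * c ^ (1/θ) * D ^ ε * (C * σ) := by rw [hηk1]
    _ ≤ 2 * c ^ (1/θ) * 2 ^ (1/θ) * (C * σ) := by
        refine mul_le_mul_of_nonneg_right
          (mul_le_mul_of_nonneg_left hN.le (by positivity)) ?_
        exact mul_nonneg hC0 hσ0
    _ = 2 * (2 * c) ^ (1/θ) * C * σ := by
        rw [Real.mul_rpow (by norm_num : (0:ℝ) ≤ 2) hc.le]
        ring

end Extrap

/-- **Quantitative extrapolation.** Let `1 < r < p < ∞` and `θ ∈ (0,1)` with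
`1/r = θ + (1-θ)/p`. If there is `c > 0` such that every absolutely `p`-summing operator
`v : X → ℓ_p` is absolutely `r`-summing with `π_r(v) ≤ c·π_p(v)`, then for every Banach space
`Y`, every `λ > 1` and every absolutely `p`-summing `h : X → Y`, the operator `h` is absolutely
`1`-summing with `π_1(h) ≤ 2·(2cλ)^(1/θ)·π_p(h)`. -/
theorem extrapolation_linear_quantitative {𝕜 : Type u} [RCLike 𝕜]
    {X : Type v} [NormedAddCommGroup X] [NormedSpace 𝕜 X] [CompleteSpace X]
    (p r θ : ℝ) (hr : 1 < r) (hrp : r < p) [Fact (1 ≤ ENNReal.ofReal p)]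
    (hθ : θ ∈ Set.Ioo (0 : ℝ) 1) (hθeq : 1 / r = θ + (1 - θ) / p)
    (c : ℝ) (hc : 0 < c)
    (hyp : ∀ v : X →L[𝕜] lp (fun _ : ℕ => 𝕜) (ENNReal.ofReal p),
      PSumming 𝕜 p v → PSumming 𝕜 r v ∧ piNorm 𝕜 r v ≤ c * piNorm 𝕜 p v) :
    ∀ (Y : Type w) [NormedAddCommGroup Y] [NormedSpace 𝕜 Y] [CompleteSpace Y],
      ∀ lam : ℝ, 1 < lam → ∀ h : X →L[𝕜] Y, PSumming 𝕜 p h →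
        PSumming 𝕜 1 h ∧ piNorm 𝕜 1 h ≤ 2 * (2 * c * lam) ^ (1 / θ) * piNorm 𝕜 p h := by
  intro Y _ _ _ lam hlam h hps
  obtain ⟨hθ0, hθ1⟩ := hθ
  have h1θ : (0:ℝ) ≤ 1/θ := div_nonneg zero_le_one hθ0.le
  have claims : ∀ C : ℝ, 0 ≤ C → PSummingWith 𝕜 p h C →
      PSummingWith 𝕜 1 h (2 * (2 * c) ^ (1 / θ) * C) := fun C h1 h2 =>
    Extrap.main_claim p r θ hr hrp hθ0 hθ1 hθeq hc hyp h h1 h2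
  obtain ⟨C₀, hC₀0, hC₀⟩ := hps
  have ha : (0:ℝ) < 2 * (2 * c) ^ (1 / θ) :=
    mul_pos two_pos (Real.rpow_pos_of_pos (by linarith) _)
  constructor
  · exact ⟨_, mul_nonneg ha.le hC₀0, claims C₀ hC₀0 hC₀⟩
  · have h1 : ∀ b ∈ {C : ℝ | 0 ≤ C ∧ PSummingWith 𝕜 p h C},
        piNorm 𝕜 1 h / (2 * (2 * c) ^ (1 / θ)) ≤ b := by
      intro b hb
      rw [div_le_iff₀ ha]
      calc piNorm 𝕜 1 h ≤ 2 * (2 * c) ^ (1 / θ) * b :=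
            Extrap.piNorm_le (mul_nonneg ha.le hb.1) (claims b hb.1 hb.2)
        _ = b * (2 * (2 * c) ^ (1 / θ)) := by ring
    have h2 : piNorm 𝕜 1 h / (2 * (2 * c) ^ (1 / θ)) ≤ piNorm 𝕜 p h :=
      le_csInf ⟨C₀, hC₀0, hC₀⟩ h1
    rw [div_le_iff₀ ha] at h2
    calc piNorm 𝕜 1 h ≤ piNorm 𝕜 p h * (2 * (2 * c) ^ (1 / θ)) := h2
      _ ≤ piNorm 𝕜 p h * (2 * (2 * c * lam) ^ (1 / θ)) := by
          refine mul_le_mul_of_nonneg_left ?_ (Extrap.piNorm_nonneg ⟨C₀, hC₀0, hC₀⟩)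
          refine mul_le_mul_of_nonneg_left ?_ (by norm_num)
          refine Real.rpow_le_rpow (by linarith) ?_ h1θ
          nlinarith
      _ = 2 * (2 * c * lam) ^ (1 / θ) * piNorm 𝕜 p h := by ring
end
end

section
/- Let K be a compact Hausdorff topological space, let 1 < r < p < ∞, and let θ ∈ (0,1) satisfy 1/r = θ + (1−θ)/p. Let G be a set of bounded nonnegative Borel measurable functions on K and let A ≥ 0. Suppose that for every Borel probability measure μ on K there exists a Borel probability measure μ̂ on K such that (∫_K g^p dμ)^{1/p} ≤ A · (∫_K g^r dμ̂)^{1/r} for all g ∈ G. Then for every Borel probability measure μ₀ on K there exists a Borel probability measure μ̄ on K such that (∫_K g^p dμ₀)^{1/p} ≤ 2·(2A)^{1/θ} · ∫_K g dμ̄ for all g ∈ G. -/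
open MeasureTheory
open scoped ENNReal NNReal

noncomputable section


lemma interp_aux {α : Type*} [MeasurableSpace α] (μ : Measure α) [IsProbabilityMeasure μ]
    {g : α → ℝ} (hg : Measurable g) (hg0 : ∀ x, 0 ≤ g x) {M : ℝ} (hM : ∀ x, g x ≤ M)
    {p r θ : ℝ} (hr0 : 0 < r) (hp0 : 0 < p) (hθ0 : 0 < θ) (hθ1 : θ * r < 1)
    (hpe : (1 - θ) * r = p * (1 - θ * r)) :
    ∫ x, g x ^ r ∂μ ≤ (∫ x, g x ∂μ) ^ (θ * r) * (∫ x, g x ^ p ∂μ) ^ (1 - θ * r) := by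
  set F : α → ℝ≥0∞ := fun x => ENNReal.ofReal (g x) with hF
  have hFmeas : Measurable F := ENNReal.measurable_ofReal.comp hg
  have key : ∀ s : ℝ, 0 < s → ∫ x, g x ^ s ∂μ = (∫⁻ x, F x ^ s ∂μ).toReal := by
    intro s hs
    rw [integral_eq_lintegral_of_nonneg_ae (ae_of_all _ fun x => Real.rpow_nonneg (hg0 x) s)
      (hg.pow_const s).aestronglyMeasurable]
    congr 1
    exact lintegral_congr fun x => (ENNReal.ofReal_rpow_of_nonneg (hg0 x) hs.le).symm
  have key1 : ∫ x, g x ∂μ = (∫⁻ x, F x ∂μ).toReal := by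
    rw [integral_eq_lintegral_of_nonneg_ae (ae_of_all _ hg0) hg.aestronglyMeasurable]
  have hfin : ∀ s : ℝ, 0 ≤ s → (∫⁻ x, F x ^ s ∂μ) ≠ ⊤ := by
    intro s hs
    have hb : (∫⁻ x, F x ^ s ∂μ) ≤ (ENNReal.ofReal M) ^ s := by
      calc (∫⁻ x, F x ^ s ∂μ) ≤ ∫⁻ _, (ENNReal.ofReal M) ^ s ∂μ :=
            lintegral_mono fun x => ENNReal.rpow_le_rpow (ENNReal.ofReal_le_ofReal (hM x)) hs
        _ = (ENNReal.ofReal M) ^ s := by simp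
    exact ne_top_of_le_ne_top (ENNReal.rpow_ne_top_of_nonneg hs ENNReal.ofReal_ne_top) hb
  have hfin1 : (∫⁻ x, F x ∂μ) ≠ ⊤ := by
    have := hfin 1 zero_le_one
    simpa using this
  have hθr0 : 0 < θ * r := mul_pos hθ0 hr0
  have hθr1 : 0 < 1 - θ * r := by linarith
  have hab : Real.HolderConjugate (1/(θ*r)) (1/(1-θ*r)) := by
    refine Real.holderConjugate_iff.mpr ⟨?_, ?_⟩
    · rw [lt_div_iff₀ hθr0]; linarith
    · rw [one_div, one_div, inv_inv, inv_inv]; ring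
  have holder := ENNReal.lintegral_mul_le_Lp_mul_Lq μ hab
    ((hFmeas.pow_const (θ*r)).aemeasurable) ((hFmeas.pow_const ((1-θ)*r)).aemeasurable)
  have e1 : ∀ x, ((fun x => F x ^ (θ*r)) * (fun x => F x ^ ((1-θ)*r))) x = F x ^ r := by
    intro x
    have : θ * r + (1-θ)*r = r := by ring
    rw [Pi.mul_apply, ← ENNReal.rpow_add_of_nonneg _ _ hθr0.le (by nlinarith), this]
  have e2 : ∀ x, (F x ^ (θ*r)) ^ (1/(θ*r)) = F x := by
    intro x
    rw [← ENNReal.rpow_mul, mul_one_div, div_self hθr0.ne', ENNReal.rpow_one]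
  have e3 : ∀ x, (F x ^ ((1-θ)*r)) ^ (1/(1-θ*r)) = F x ^ p := by
    intro x
    rw [← ENNReal.rpow_mul, mul_one_div, hpe, mul_div_assoc, div_self hθr1.ne', mul_one]
  rw [lintegral_congr e1] at holder
  simp only [lintegral_congr e2, lintegral_congr e3, one_div_one_div] at holder
  rw [key r hr0, key p hp0, key1]
  have hRfin : (∫⁻ x, F x ∂μ) ^ (θ*r) * (∫⁻ x, F x ^ p ∂μ) ^ (1 - θ*r) ≠ ⊤ :=
    ENNReal.mul_ne_top (ENNReal.rpow_ne_top_of_nonneg hθr0.le hfin1)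
      (ENNReal.rpow_ne_top_of_nonneg hθr1.le (hfin p hp0.le))
  calc (∫⁻ x, F x ^ r ∂μ).toReal
      ≤ ((∫⁻ x, F x ∂μ) ^ (θ*r) * (∫⁻ x, F x ^ p ∂μ) ^ (1 - θ*r)).toReal :=
        ENNReal.toReal_mono hRfin holder
    _ = (∫⁻ x, F x ∂μ).toReal ^ (θ*r) * (∫⁻ x, F x ^ p ∂μ).toReal ^ (1 - θ*r) := by
        rw [ENNReal.toReal_mul, ENNReal.toReal_rpow, ENNReal.toReal_rpow]

/-- **Iteration lemma of Maurey's extrapolation argument.** Let `K` be compact Hausdorff,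
`1 < r < p < ∞`, `θ ∈ (0,1)` with `1/r = θ + (1-θ)/p`, `G` a set of bounded nonnegative Borel
functions on `K`, and `A ≥ 0`. If for every Borel probability measure `μ` on `K` there is a
Borel probability measure `μ̂` with `(∫ g^p dμ)^(1/p) ≤ A·(∫ g^r dμ̂)^(1/r)` for all `g ∈ G`,
then for every Borel probability measure `μ₀` there is a Borel probability measure `μ̄` with
`(∫ g^p dμ₀)^(1/p) ≤ 2·(2A)^(1/θ)·∫ g dμ̄` for all `g ∈ G`. -/
theorem extrapolation_measure_iteration {K : Type u} [TopologicalSpace K] [CompactSpace K]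
    [T2Space K] [MeasurableSpace K] [BorelSpace K]
    (p r θ : ℝ) (hr : 1 < r) (hrp : r < p) (hθ : θ ∈ Set.Ioo (0 : ℝ) 1)
    (hθeq : 1 / r = θ + (1 - θ) / p)
    (G : Set (K → ℝ)) (A : ℝ) (hA : 0 ≤ A)
    (hGmeas : ∀ g ∈ G, Measurable g)
    (hGnonneg : ∀ g ∈ G, ∀ x, 0 ≤ g x)
    (hGbdd : ∀ g ∈ G, ∃ M : ℝ, ∀ x, g x ≤ M)
    (hyp : ∀ μ : Measure K, IsProbabilityMeasure μ →
      ∃ μhat : Measure K, IsProbabilityMeasure μhat ∧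
        ∀ g ∈ G, (∫ x, g x ^ p ∂μ) ^ (1 / p) ≤ A * (∫ x, g x ^ r ∂μhat) ^ (1 / r)) :
    ∀ μ₀ : Measure K, IsProbabilityMeasure μ₀ →
      ∃ μbar : Measure K, IsProbabilityMeasure μbar ∧
        ∀ g ∈ G, (∫ x, g x ^ p ∂μ₀) ^ (1 / p) ≤ 2 * (2 * A) ^ (1 / θ) * ∫ x, g x ∂μbar := by
  obtain ⟨hθ0, hθ1⟩ := hθ
  have hr0 : 0 < r := lt_trans one_pos hr
  have hp0 : 0 < p := lt_trans hr0 hrp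
  -- exponent arithmetic
  have hpe : (1 - θ) * r = p * (1 - θ * r) := by
    have h := hθeq
    field_simp at h
    nlinarith [h]
  have hθr1 : θ * r < 1 := by
    nlinarith [mul_pos (sub_pos.mpr hθ1) hr0]
  have hexp : (1 - θ * r) / r = (1 - θ) / p := by
    rw [div_eq_div_iff hr0.ne' hp0.ne']
    nlinarith [hpe]
  intro μ₀ hμ₀
  choose! hat hatprob hatineq using hyp
  set seq : ℕ → Measure K := fun n => hat^[n] μ₀ with hseq
  have hseqsucc : ∀ n, seq (n+1) = hat (seq n) := fun n => Function.iterate_succ_apply' hat n μ₀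
  have hprob : ∀ n, IsProbabilityMeasure (seq n) := by
    intro n; induction n with
    | zero => simpa [hseq] using hμ₀
    | succ n ih => rw [hseqsucc]; exact hatprob _ ih
  set μbar : Measure K := Measure.sum (fun n => ((2:ℝ≥0∞)^(n+1))⁻¹ • seq n) with hμbar
  have hbarprob : IsProbabilityMeasure μbar := by
    constructor
    rw [hμbar, Measure.sum_apply _ MeasurableSet.univ]
    have : ∀ n : ℕ, (((2:ℝ≥0∞)^(n+1))⁻¹ • seq n) Set.univ = (2:ℝ≥0∞)⁻¹ * (2⁻¹)^n := by
      intro n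
      rw [Measure.smul_apply, (hprob n).measure_univ, smul_eq_mul, mul_one, pow_succ',
        ENNReal.mul_inv (Or.inl (by norm_num)) (Or.inl (by norm_num)), ← ENNReal.inv_pow]
    rw [tsum_congr this, ENNReal.tsum_mul_left, ENNReal.tsum_geometric]
    rw [ENNReal.one_sub_inv_two, inv_inv]
    exact ENNReal.inv_mul_cancel (by norm_num) (by norm_num)
  refine ⟨μbar, hbarprob, ?_⟩
  intro g hg
  obtain ⟨M₀, hM₀⟩ := hGbdd g hg
  set M : ℝ := max M₀ 1 with hMdef
  have hM : ∀ x, g x ≤ M := fun x => le_trans (hM₀ x) (le_max_left _ _)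
  have hM1 : (1:ℝ) ≤ M := le_max_right _ _
  have hM0 : (0:ℝ) ≤ M := le_trans zero_le_one hM1
  have hgmeas := hGmeas g hg
  have hg0 := hGnonneg g hg
  -- integrability over any probability measure
  have hint : ∀ (ν : Measure K), IsProbabilityMeasure ν → ∀ s : ℝ, 0 ≤ s →
      Integrable (fun x => g x ^ s) ν := by
    intro ν hν s hs
    refine (integrable_const (M ^ s)).mono' (hgmeas.pow_const s).aestronglyMeasurable ?_
    refine ae_of_all _ fun x => ?_
    rw [Real.norm_of_nonneg (Real.rpow_nonneg (hg0 x) s)]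
    exact Real.rpow_le_rpow (hg0 x) (hM x) hs
  have hIbar : Integrable g μbar := by
    have := hint μbar hbarprob 1 zero_le_one
    simpa [Real.rpow_one] using this
  set I : ℝ := ∫ x, g x ∂μbar with hI
  have hI0 : 0 ≤ I := integral_nonneg hg0
  have hcle : ∀ n : ℕ, ∫ x, g x ∂(seq n) ≤ 2^(n+1) * I := by
    intro n
    have hle : (((2:ℝ≥0∞)^(n+1))⁻¹ • seq n) ≤ μbar := hμbar ▸ Measure.le_sum _ n
    have h1 : ∫ x, g x ∂(((2:ℝ≥0∞)^(n+1))⁻¹ • seq n) ≤ I :=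
      integral_mono_measure hle (ae_of_all _ hg0) hIbar
    rw [integral_smul_measure] at h1
    have h2 : (((2:ℝ≥0∞)^(n+1))⁻¹).toReal = ((2:ℝ)^(n+1))⁻¹ := by
      rw [ENNReal.toReal_inv]
      norm_num
    rw [h2, smul_eq_mul] at h1
    have hpow : (0:ℝ) < 2^(n+1) := by positivity
    rwa [inv_mul_le_iff₀ hpow] at h1
  set al : ℕ → ℝ := fun n => (∫ x, g x ^ p ∂(seq n)) ^ (1/p) with hal
  have hPnn : ∀ n, (0:ℝ) ≤ ∫ x, g x ^ p ∂(seq n) :=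
    fun n => integral_nonneg fun x => Real.rpow_nonneg (hg0 x) p
  have halnn : ∀ n, 0 ≤ al n := fun n => Real.rpow_nonneg (hPnn n) _
  have halM : ∀ n, al n ≤ M := by
    intro n
    have h1 : ∫ x, g x ^ p ∂(seq n) ≤ M ^ p := by
      have hpm := hprob n
      calc ∫ x, g x ^ p ∂(seq n) ≤ ∫ _x, M ^ p ∂(seq n) :=
            integral_mono (hint _ (hprob n) p hp0.le) (integrable_const _)
              (fun x => Real.rpow_le_rpow (hg0 x) (hM x) hp0.le)
        _ = M ^ p := by simp
    calc al n ≤ (M ^ p) ^ (1/p) := Real.rpow_le_rpow (hPnn n) h1 (by positivity)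
      _ = M := by
          rw [← Real.rpow_mul hM0, mul_one_div, div_self hp0.ne', Real.rpow_one]
  have hrec : ∀ n : ℕ, al n ≤ A * ((2:ℝ)^(n+2) * I)^θ * al (n+1) ^ (1-θ) := by
    intro n
    have hprobn1 : IsProbabilityMeasure (seq (n+1)) := hprob (n+1)
    have h1 : al n ≤ A * (∫ x, g x ^ r ∂(seq (n+1))) ^ (1/r) := by
      have hh := hatineq (seq n) (hprob n) g hg
      rwa [← hseqsucc n] at hh
    have h2 := interp_aux (seq (n+1)) hgmeas hg0 hM hr0 hp0 hθ0 hθr1 hpe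
    have hJ0 : (0:ℝ) ≤ ∫ x, g x ∂(seq (n+1)) := integral_nonneg hg0
    have hb0 : (0:ℝ) ≤ ∫ x, g x ^ r ∂(seq (n+1)) :=
      integral_nonneg fun x => Real.rpow_nonneg (hg0 x) r
    have h3 : (∫ x, g x ^ r ∂(seq (n+1))) ^ (1/r)
        ≤ (∫ x, g x ∂(seq (n+1)))^θ * al (n+1) ^ (1-θ) := by
      calc (∫ x, g x ^ r ∂(seq (n+1))) ^ (1/r)
          ≤ ((∫ x, g x ∂(seq (n+1)))^(θ*r) * (∫ x, g x ^ p ∂(seq (n+1)))^(1-θ*r)) ^ (1/r) :=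
            Real.rpow_le_rpow hb0 h2 (by positivity)
        _ = (∫ x, g x ∂(seq (n+1)))^θ * al (n+1) ^ (1-θ) := by
            rw [Real.mul_rpow (Real.rpow_nonneg hJ0 _) (Real.rpow_nonneg (hPnn (n+1)) _),
              ← Real.rpow_mul hJ0, ← Real.rpow_mul (hPnn (n+1))]
            have e1 : θ * r * (1/r) = θ := by field_simp
            have e2 : (1 - θ*r) * (1/r) = (1/p) * (1-θ) := by
              rw [mul_one_div, hexp]
              ring
            rw [e1, e2, Real.rpow_mul (hPnn (n+1))]
    have h4 : (∫ x, g x ∂(seq (n+1)))^θ ≤ ((2:ℝ)^(n+2) * I)^θ :=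
      Real.rpow_le_rpow hJ0 (by simpa using hcle (n+1)) hθ0.le
    calc al n ≤ A * ((∫ x, g x ∂(seq (n+1)))^θ * al (n+1) ^ (1-θ)) :=
          h1.trans (mul_le_mul_of_nonneg_left h3 hA)
      _ ≤ A * (((2:ℝ)^(n+2) * I)^θ * al (n+1) ^ (1-θ)) :=
          mul_le_mul_of_nonneg_left
            (mul_le_mul_of_nonneg_right h4 (Real.rpow_nonneg (halnn (n+1)) _)) hA
      _ = A * ((2:ℝ)^(n+2) * I)^θ * al (n+1) ^ (1-θ) := by ring
  set t : ℕ → ℝ := fun n => al n / 2^n with htdef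
  have ht0 : ∀ n, 0 ≤ t n := fun n => div_nonneg (halnn n) (by positivity)
  have htM : ∀ n, t n ≤ M := by
    intro n
    have h1 : (1:ℝ) ≤ 2^n := one_le_pow₀ (by norm_num)
    exact (div_le_self (halnn n) h1).trans (halM n)
  set D : ℝ := 2 ^ ((1:ℝ)+θ) * A * I ^ θ with hD
  have hD0 : 0 ≤ D :=
    mul_nonneg (mul_nonneg (Real.rpow_nonneg (by norm_num) _) hA) (Real.rpow_nonneg hI0 _)
  have hala : ∀ n, al n = t n * 2^n := fun n =>
    (div_mul_cancel₀ _ (by positivity : ((2:ℝ)^n) ≠ 0)).symm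
  have hrec' : ∀ n, t n ≤ D * t (n+1) ^ (1-θ) := by
    intro n
    have hpw : (0:ℝ) < 2^n := by positivity
    have step : al n / 2^n ≤ (A * ((2:ℝ)^(n+2) * I)^θ * al (n+1) ^ (1-θ)) / 2^n := by
      gcongr
      exact hrec n
    refine step.trans (le_of_eq ?_)
    rw [hala (n+1), Real.mul_rpow (ht0 (n+1)) (by positivity),
      Real.mul_rpow (by positivity : (0:ℝ) ≤ (2:ℝ)^(n+2)) hI0]
    have hkey2' : ((2:ℝ)^(n+2))^θ * ((2:ℝ)^(n+1))^(1-θ) = 2 ^ ((1:ℝ)+θ) * (2:ℝ)^n := by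
      rw [← Real.rpow_natCast (2:ℝ) (n+2), ← Real.rpow_natCast (2:ℝ) (n+1),
        ← Real.rpow_natCast (2:ℝ) n, ← Real.rpow_mul (by norm_num),
        ← Real.rpow_mul (by norm_num), ← Real.rpow_add two_pos, ← Real.rpow_add two_pos]
      congr 1
      push_cast
      ring
    rw [div_eq_iff hpw.ne', hD]
    linear_combination (A * I^θ * t (n+1) ^ (1-θ)) * hkey2'
  have hbddt : BddAbove (Set.range t) := ⟨M, by rintro x ⟨n, rfl⟩; exact htM n⟩
  set T : ℝ := ⨆ n, t n with hT
  have hle_T : ∀ n, t n ≤ T := fun n => le_ciSup hbddt n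
  have hT0 : 0 ≤ T := (ht0 0).trans (hle_T 0)
  have hT_le : T ≤ D * T ^ (1-θ) :=
    ciSup_le fun n => (hrec' n).trans
      (mul_le_mul_of_nonneg_left
        (Real.rpow_le_rpow (ht0 _) (hle_T _) (by linarith)) hD0)
  have hgoal0 : (∫ x, g x ^ p ∂μ₀) ^ (1/p) = t 0 := by
    have h0 : al 0 = (∫ x, g x ^ p ∂μ₀) ^ (1/p) := rfl
    show _ = al 0 / 2^0
    rw [h0, pow_zero, div_one]
  have hRHS0 : 0 ≤ 2 * (2*A)^(1/θ) * I :=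
    mul_nonneg (mul_nonneg (by norm_num) (Real.rpow_nonneg (by linarith) _)) hI0
  rcases le_or_gt T 0 with hc | hc
  · have : t 0 ≤ 0 := (hle_T 0).trans hc
    rw [hgoal0]
    linarith
  · have hTθ : T ^ θ ≤ D := by
      have h1 : T ^ θ * T ^ (1-θ) ≤ D * T ^ (1-θ) := by
        rw [← Real.rpow_add hc]
        have e4 : θ + (1-θ) = 1 := by ring
        rw [e4, Real.rpow_one]
        exact hT_le
      exact le_of_mul_le_mul_right h1 (Real.rpow_pos_of_pos hc _)
    have hTle : T ≤ D ^ (1/θ) := by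
      have h2 := Real.rpow_le_rpow (Real.rpow_nonneg hT0 θ) hTθ
        (le_of_lt (by positivity : (0:ℝ) < 1/θ))
      rwa [← Real.rpow_mul hT0, mul_one_div, div_self hθ0.ne', Real.rpow_one] at h2
    have hDval : D ^ (1/θ) = 2 * (2*A)^(1/θ) * I := by
      rw [hD, Real.mul_rpow (mul_nonneg (Real.rpow_nonneg (by norm_num) _) hA)
          (Real.rpow_nonneg hI0 _),
        Real.mul_rpow (Real.rpow_nonneg (by norm_num) _) hA,
        ← Real.rpow_mul hI0, mul_one_div, div_self hθ0.ne', Real.rpow_one,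
        ← Real.rpow_mul (by norm_num : (0:ℝ) ≤ 2),
        Real.mul_rpow (by norm_num : (0:ℝ) ≤ 2) hA]
      have e3 : (1+θ) * (1/θ) = 1/θ + 1 := by field_simp
      rw [e3, Real.rpow_add two_pos, Real.rpow_one]
      ring
    rw [hgoal0]
    calc t 0 ≤ T := hle_T 0
      _ ≤ D ^ (1/θ) := hTle
      _ = 2 * (2*A)^(1/θ) * I := hDval
end
end

section
/- Let X be a metric space, Y a Banach space, and 1 ≤ p < ∞. Then the set Π_p^L(X;Y) of Lipschitz p-summing maps from X to Y is closed under pointwise addition and scalar multiplication, π_p^L is a norm on it (after identifying maps at a base point, i.e., on maps vanishing at a fixed base point), and (Π_p^L(X;Y), π_p^L) is complete. -/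
open scoped BigOperators ENNReal
open Finset MeasureTheory

noncomputable section

/-- `T` is Lipschitz `t`-summing with constant `C`:
`∑ᵢ d_Y(T xᵢ, T yᵢ)^t ≤ C^t · sup_{f ∈ B_{X^#}} ∑ᵢ |f xᵢ - f yᵢ|^t`, the sup running over
all real-valued Lipschitz functions on `X` with Lipschitz constant at most `1`. -/
def LipSummingWith {X Y : Type*} [MetricSpace X] [MetricSpace Y]
    (t : ℝ) (T : X → Y) (C : ℝ) : Prop :=
  ∀ (n : ℕ) (x y : Fin n → X),
    ∑ i, dist (T (x i)) (T (y i)) ^ t ≤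
      C ^ t * ⨆ f : {f : X → ℝ // LipschitzWith 1 f},
        ∑ i, |(f : X → ℝ) (x i) - (f : X → ℝ) (y i)| ^ t

/-- `T` is Lipschitz `t`-summing. -/
def LipSumming {X Y : Type*} [MetricSpace X] [MetricSpace Y] (t : ℝ) (T : X → Y) : Prop :=
  ∃ C : ℝ, 0 ≤ C ∧ LipSummingWith t T C

/-- The Lipschitz `t`-summing norm `π_t^L(T)`: the infimum of the admissible constants. -/
def piLip {X Y : Type*} [MetricSpace X] [MetricSpace Y] (t : ℝ) (T : X → Y) : ℝ :=
  sInf {C : ℝ | 0 ≤ C ∧ LipSummingWith t T C}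

section Aux

variable {X : Type u} [MetricSpace X]

instance lip1Nonempty : Nonempty {f : X → ℝ // LipschitzWith 1 f} :=
  ⟨⟨fun _ => 0, (LipschitzWith.const 0).weaken zero_le_one⟩⟩

variable {p : ℝ}

lemma supS_bddAbove (hp0 : 0 ≤ p) {n : ℕ} (x y : Fin n → X) :
    BddAbove (Set.range fun f : {f : X → ℝ // LipschitzWith 1 f} =>
      ∑ i, |(f : X → ℝ) (x i) - (f : X → ℝ) (y i)| ^ p) := by
  refine ⟨∑ i, dist (x i) (y i) ^ p, ?_⟩
  rintro v ⟨⟨f, hf⟩, rfl⟩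
  refine Finset.sum_le_sum fun i _ => Real.rpow_le_rpow (abs_nonneg _) ?_ hp0
  simpa [Real.dist_eq] using hf.dist_le_mul (x i) (y i)

lemma supS_nonneg {n : ℕ} (x y : Fin n → X) :
    0 ≤ ⨆ f : {f : X → ℝ // LipschitzWith 1 f},
      ∑ i, |(f : X → ℝ) (x i) - (f : X → ℝ) (y i)| ^ p :=
  Real.iSup_nonneg fun _ => Finset.sum_nonneg fun _ _ => Real.rpow_nonneg (abs_nonneg _) _

end Aux

section Aux2
set_option linter.unusedSectionVars false

variable {X : Type u} [MetricSpace X] {Y : Type v} [NormedAddCommGroup Y] [NormedSpace ℝ Y]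
variable {p : ℝ}

lemma dist_le_of_with (hp : 1 ≤ p) {T : X → Y} {C : ℝ} (hC : 0 ≤ C)
    (h : LipSummingWith p T C) (x y : X) : dist (T x) (T y) ≤ C * dist x y := by
  have hp0 : 0 < p := lt_of_lt_of_le one_pos hp
  have key := h 1 ![x] ![y]
  simp only [Fin.sum_univ_one, Matrix.cons_val_zero] at key
  have hsup : (⨆ f : {f : X → ℝ // LipschitzWith 1 f},
      |(f : X → ℝ) x - (f : X → ℝ) y| ^ p) ≤ dist x y ^ p := by
    refine ciSup_le fun ⟨f, hf⟩ => ?_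
    exact Real.rpow_le_rpow (abs_nonneg _)
      (by simpa [Real.dist_eq] using hf.dist_le_mul x y) hp0.le
  have : dist (T x) (T y) ^ p ≤ (C * dist x y) ^ p := by
    calc dist (T x) (T y) ^ p ≤ C ^ p * (⨆ f : {f : X → ℝ // LipschitzWith 1 f},
          |(f : X → ℝ) x - (f : X → ℝ) y| ^ p) := key
      _ ≤ C ^ p * dist x y ^ p :=
          mul_le_mul_of_nonneg_left hsup (Real.rpow_nonneg hC _)
      _ = (C * dist x y) ^ p := (Real.mul_rpow hC dist_nonneg).symm
  exact (Real.rpow_le_rpow_iff dist_nonneg (mul_nonneg hC dist_nonneg) hp0).mp this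

lemma lipSummingWith_zero (hp0 : 0 < p) : LipSummingWith p (0 : X → Y) 0 := by
  intro n x y
  have h1 : ∀ i : Fin n, dist ((0 : X → Y) (x i)) ((0 : X → Y) (y i)) ^ p = 0 := by
    intro i; simp [Real.zero_rpow hp0.ne']
  simp only [h1, Finset.sum_const, smul_zero]
  rw [Real.zero_rpow hp0.ne', zero_mul]

lemma piLip_nonneg (T : X → Y) : 0 ≤ piLip p T :=
  Real.sInf_nonneg fun _ hC => hC.1

lemma lipSummingWith_piLip (hp : 1 ≤ p) {T : X → Y} (h : LipSumming p T) :
    LipSummingWith p T (piLip p T) := by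
  have hp0 : 0 < p := lt_of_lt_of_le one_pos hp
  set A := {C : ℝ | 0 ≤ C ∧ LipSummingWith p T C} with hA
  have hne : A.Nonempty := ⟨h.choose, h.choose_spec⟩
  have hbdd : BddBelow A := ⟨0, fun C hC => hC.1⟩
  intro n x y
  set M := ⨆ f : {f : X → ℝ // LipschitzWith 1 f},
      ∑ i, |(f : X → ℝ) (x i) - (f : X → ℝ) (y i)| ^ p with hM
  have hM0 : 0 ≤ M := supS_nonneg x y
  have key : ∀ ε : ℝ, 0 < ε →
      ∑ i, dist (T (x i)) (T (y i)) ^ p ≤ (sInf A + ε) ^ p * M := by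
    intro ε hε
    obtain ⟨C, hCA, hC⟩ := exists_lt_of_csInf_lt hne (lt_add_of_pos_right (sInf A) hε)
    calc ∑ i, dist (T (x i)) (T (y i)) ^ p ≤ C ^ p * M := hCA.2 n x y
      _ ≤ (sInf A + ε) ^ p * M :=
        mul_le_mul_of_nonneg_right (Real.rpow_le_rpow hCA.1 hC.le hp0.le) hM0
  have t1 : Filter.Tendsto (fun ε : ℝ => (sInf A + ε) ^ p * M)
      (nhdsWithin 0 (Set.Ioi 0)) (nhds ((sInf A) ^ p * M)) := by
    have h1 : Filter.Tendsto (fun ε : ℝ => sInf A + ε) (nhdsWithin 0 (Set.Ioi 0))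
        (nhds (sInf A)) := by
      have h0 : Filter.Tendsto (fun ε : ℝ => sInf A + ε) (nhds (0 : ℝ))
          (nhds (sInf A + 0)) := tendsto_const_nhds.add Filter.tendsto_id
      rw [add_zero] at h0
      exact h0.mono_left nhdsWithin_le_nhds
    exact (h1.rpow_const (Or.inr hp0.le)).mul_const M
  exact ge_of_tendsto t1 (Filter.eventually_of_mem self_mem_nhdsWithin
    fun ε hε => key ε hε)

lemma piLip_mem (hp : 1 ≤ p) {T : X → Y} (h : LipSumming p T) :
    piLip p T ∈ {C : ℝ | 0 ≤ C ∧ LipSummingWith p T C} :=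
  ⟨piLip_nonneg T, lipSummingWith_piLip hp h⟩

end Aux2

section Aux3
set_option linter.unusedSectionVars false
variable {X : Type u} [MetricSpace X] {Y : Type v} [NormedAddCommGroup Y] [NormedSpace ℝ Y]
variable {p : ℝ}

lemma LipSummingWith.add' (hp : 1 ≤ p) {T S : X → Y} {C D : ℝ} (hC : 0 ≤ C) (hD : 0 ≤ D)
    (hT : LipSummingWith p T C) (hS : LipSummingWith p S D) :
    LipSummingWith p (T + S) (C + D) := by
  have hp0 : 0 < p := lt_of_lt_of_le one_pos hp
  intro n x y
  set M := ⨆ f : {f : X → ℝ // LipschitzWith 1 f},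
      ∑ i, |(f : X → ℝ) (x i) - (f : X → ℝ) (y i)| ^ p with hMdef
  have hM0 : 0 ≤ M := supS_nonneg x y
  set a : Fin n → ℝ := fun i => dist (T (x i)) (T (y i)) with ha
  set b : Fin n → ℝ := fun i => dist (S (x i)) (S (y i)) with hb
  have hpow : ∀ {z : ℝ}, 0 ≤ z → (z ^ p) ^ (1 / p) = z := by
    intro z hz
    rw [← Real.rpow_mul hz, mul_one_div, div_self hp0.ne', Real.rpow_one]
  have hpow' : ∀ {z : ℝ}, 0 ≤ z → (z ^ (1 / p)) ^ p = z := by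
    intro z hz
    rw [← Real.rpow_mul hz, one_div_mul_cancel hp0.ne', Real.rpow_one]
  have step1 : ∑ i, dist ((T + S) (x i)) ((T + S) (y i)) ^ p ≤ ∑ i, (a i + b i) ^ p := by
    refine Finset.sum_le_sum fun i _ => Real.rpow_le_rpow dist_nonneg ?_ hp0.le
    simpa [Pi.add_apply] using dist_add_add_le (T (x i)) (S (x i)) (T (y i)) (S (y i))
  have hsum_a : ∑ i, a i ^ p ≤ C ^ p * M := hT n x y
  have hsum_b : ∑ i, b i ^ p ≤ D ^ p * M := hS n x y
  have ha0 : ∀ i, 0 ≤ a i := fun i => dist_nonneg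
  have hb0 : ∀ i, 0 ≤ b i := fun i => dist_nonneg
  have hsa0 : 0 ≤ ∑ i, a i ^ p := Finset.sum_nonneg fun i _ => Real.rpow_nonneg (ha0 i) _
  have hsb0 : 0 ≤ ∑ i, b i ^ p := Finset.sum_nonneg fun i _ => Real.rpow_nonneg (hb0 i) _
  have hroot_a : (∑ i, a i ^ p) ^ (1 / p) ≤ C * M ^ (1 / p) := by
    calc (∑ i, a i ^ p) ^ (1 / p) ≤ (C ^ p * M) ^ (1 / p) :=
          Real.rpow_le_rpow hsa0 hsum_a (by positivity)
      _ = C * M ^ (1 / p) := by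
          rw [Real.mul_rpow (Real.rpow_nonneg hC _) hM0, hpow hC]
  have hroot_b : (∑ i, b i ^ p) ^ (1 / p) ≤ D * M ^ (1 / p) := by
    calc (∑ i, b i ^ p) ^ (1 / p) ≤ (D ^ p * M) ^ (1 / p) :=
          Real.rpow_le_rpow hsb0 hsum_b (by positivity)
      _ = D * M ^ (1 / p) := by
          rw [Real.mul_rpow (Real.rpow_nonneg hD _) hM0, hpow hD]
  have mink : (∑ i, (a i + b i) ^ p) ^ (1 / p) ≤
      (∑ i, a i ^ p) ^ (1 / p) + (∑ i, b i ^ p) ^ (1 / p) := by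
    have := Real.Lp_add_le Finset.univ a b hp
    simpa [abs_of_nonneg, ha0, hb0, fun i => abs_of_nonneg (add_nonneg (ha0 i) (hb0 i)),
      fun i => abs_of_nonneg (ha0 i), fun i => abs_of_nonneg (hb0 i)] using this
  have hsab0 : 0 ≤ ∑ i, (a i + b i) ^ p :=
    Finset.sum_nonneg fun i _ => Real.rpow_nonneg (add_nonneg (ha0 i) (hb0 i)) _
  have final : ∑ i, (a i + b i) ^ p ≤ (C + D) ^ p * M := by
    have hle : (∑ i, (a i + b i) ^ p) ^ (1 / p) ≤ (C + D) * M ^ (1 / p) := by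
      calc (∑ i, (a i + b i) ^ p) ^ (1 / p) ≤
            (∑ i, a i ^ p) ^ (1 / p) + (∑ i, b i ^ p) ^ (1 / p) := mink
        _ ≤ C * M ^ (1 / p) + D * M ^ (1 / p) := add_le_add hroot_a hroot_b
        _ = (C + D) * M ^ (1 / p) := by ring
    have := Real.rpow_le_rpow (Real.rpow_nonneg hsab0 _) hle hp0.le
    rwa [hpow' hsab0, Real.mul_rpow (add_nonneg hC hD) (Real.rpow_nonneg hM0 _),
      hpow' hM0] at this
  exact step1.trans final

lemma LipSummingWith.smul' (hp0 : 0 < p) (c : ℝ) {T : X → Y} {C : ℝ} (hC : 0 ≤ C)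
    (hT : LipSummingWith p T C) : LipSummingWith p (c • T) (|c| * C) := by
  intro n x y
  have hdist : ∀ i : Fin n, dist ((c • T) (x i)) ((c • T) (y i)) ^ p =
      |c| ^ p * dist (T (x i)) (T (y i)) ^ p := by
    intro i
    rw [Pi.smul_apply, Pi.smul_apply, dist_smul₀, Real.norm_eq_abs,
      Real.mul_rpow (abs_nonneg c) dist_nonneg]
  calc ∑ i, dist ((c • T) (x i)) ((c • T) (y i)) ^ p
      = |c| ^ p * ∑ i, dist (T (x i)) (T (y i)) ^ p := by
        simp_rw [hdist]; rw [Finset.mul_sum]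
    _ ≤ |c| ^ p * (C ^ p * (⨆ f : {f : X → ℝ // LipschitzWith 1 f},
          ∑ i, |(f : X → ℝ) (x i) - (f : X → ℝ) (y i)| ^ p)) :=
        mul_le_mul_of_nonneg_left (hT n x y) (Real.rpow_nonneg (abs_nonneg c) _)
    _ = (|c| * C) ^ p * (⨆ f : {f : X → ℝ // LipschitzWith 1 f},
          ∑ i, |(f : X → ℝ) (x i) - (f : X → ℝ) (y i)| ^ p) := by
        rw [Real.mul_rpow (abs_nonneg c) hC, mul_assoc]

lemma LipSumming.add' (hp : 1 ≤ p) {T S : X → Y} (hT : LipSumming p T)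
    (hS : LipSumming p S) : LipSumming p (T + S) := by
  obtain ⟨C, hC, hTC⟩ := hT
  obtain ⟨D, hD, hSD⟩ := hS
  exact ⟨C + D, add_nonneg hC hD, LipSummingWith.add' hp hC hD hTC hSD⟩

lemma LipSumming.smul' (hp : 1 ≤ p) (c : ℝ) {T : X → Y} (hT : LipSumming p T) :
    LipSumming p (c • T) := by
  obtain ⟨C, hC, hTC⟩ := hT
  exact ⟨|c| * C, mul_nonneg (abs_nonneg c) hC,
    LipSummingWith.smul' (lt_of_lt_of_le one_pos hp) c hC hTC⟩

lemma LipSumming.sub' (hp : 1 ≤ p) {T S : X → Y} (hT : LipSumming p T)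
    (hS : LipSumming p S) : LipSumming p (T - S) := by
  have h : T - S = T + (-1 : ℝ) • S := by
    funext z; simp [sub_eq_add_neg]
  rw [h]
  exact hT.add' hp (hS.smul' hp (-1))

end Aux3

/-- `(Π_p^L(X;Y), π_p^L)` for `Y` a Banach space: the Lipschitz `p`-summing maps are closed
under pointwise addition and scalar multiplication, `π_p^L` is a norm on the maps vanishing at
a fixed base point `x₀`, and the resulting space is complete. -/
theorem lipschitz_summing_banach_space {X : Type u} [MetricSpace X] (x₀ : X)
    {Y : Type v} [NormedAddCommGroup Y] [NormedSpace ℝ Y] [CompleteSpace Y]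
    (p : ℝ) (hp : 1 ≤ p) :
    -- closed under pointwise addition
    (∀ T S : X → Y, LipSumming p T → LipSumming p S → LipSumming p (T + S)) ∧
    -- closed under scalar multiplication
    (∀ (a : ℝ) (T : X → Y), LipSumming p T → LipSumming p (a • T)) ∧
    -- `π_p^L` is nonnegative, subadditive, homogeneous, and definite on maps vanishing at `x₀`
    (∀ T : X → Y, LipSumming p T → 0 ≤ piLip p T) ∧
    (∀ T S : X → Y, LipSumming p T → LipSumming p S →
      piLip p (T + S) ≤ piLip p T + piLip p S) ∧
    (∀ (a : ℝ) (T : X → Y), LipSumming p T → piLip p (a • T) = |a| * piLip p T) ∧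
    (∀ T : X → Y, LipSumming p T → T x₀ = 0 → piLip p T = 0 → T = 0) ∧
    -- completeness: every `π_p^L`-Cauchy sequence of summing maps vanishing at `x₀` converges
    (∀ u : ℕ → X → Y, (∀ n, LipSumming p (u n) ∧ u n x₀ = 0) →
      (∀ ε : ℝ, 0 < ε → ∃ N : ℕ, ∀ m n, N ≤ m → N ≤ n → piLip p (u m - u n) < ε) →
      ∃ T : X → Y, LipSumming p T ∧ T x₀ = 0 ∧
        Filter.Tendsto (fun n => piLip p (u n - T)) Filter.atTop (nhds 0)) := by
  have hp0 : 0 < p := lt_of_lt_of_le one_pos hp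
  have hbdd : ∀ T : X → Y, BddBelow {C : ℝ | 0 ≤ C ∧ LipSummingWith p T C} :=
    fun T => ⟨0, fun C hC => hC.1⟩
  refine ⟨fun T S hT hS => hT.add' hp hS, fun a T hT => hT.smul' hp a,
    fun T _ => piLip_nonneg T, ?_, ?_, ?_, ?_⟩
  · -- subadditivity
    intro T S hT hS
    exact csInf_le (hbdd _) ⟨add_nonneg (piLip_nonneg T) (piLip_nonneg S),
      LipSummingWith.add' hp (piLip_nonneg T) (piLip_nonneg S)
        (lipSummingWith_piLip hp hT) (lipSummingWith_piLip hp hS)⟩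
  · -- homogeneity
    intro a T hT
    rcases eq_or_ne a 0 with rfl | ha
    · rw [zero_smul, abs_zero, zero_mul]
      refine le_antisymm (csInf_le (hbdd _) ⟨le_rfl, lipSummingWith_zero hp0⟩)
        (piLip_nonneg _)
    · refine le_antisymm ?_ ?_
      · exact csInf_le (hbdd _) ⟨mul_nonneg (abs_nonneg a) (piLip_nonneg T),
          LipSummingWith.smul' hp0 a (piLip_nonneg T) (lipSummingWith_piLip hp hT)⟩
      · have hsm : LipSumming p (a • T) := hT.smul' hp a
        have h2 : piLip p T ≤ |a|⁻¹ * piLip p (a • T) := by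
          have hmem : LipSummingWith p (a⁻¹ • (a • T)) (|a⁻¹| * piLip p (a • T)) :=
            LipSummingWith.smul' hp0 a⁻¹ (piLip_nonneg _) (lipSummingWith_piLip hp hsm)
          rw [inv_smul_smul₀ ha, abs_inv] at hmem
          exact csInf_le (hbdd _)
            ⟨mul_nonneg (by positivity) (piLip_nonneg _), hmem⟩
        have := mul_le_mul_of_nonneg_left h2 (abs_nonneg a)
        rwa [← mul_assoc, mul_inv_cancel₀ (abs_ne_zero.mpr ha), one_mul] at this
  · -- definiteness
    intro T hT hT0 hpi
    have hw : LipSummingWith p T 0 := hpi ▸ lipSummingWith_piLip hp hT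
    funext z
    have := dist_le_of_with hp le_rfl hw z x₀
    rw [zero_mul] at this
    have hz : T z = T x₀ := by
      rw [← dist_le_zero]; exact this
    rw [hz, hT0, Pi.zero_apply]
  · -- completeness
    intro u h1 h2
    -- pointwise Cauchy
    have hdiffsum : ∀ m n : ℕ, LipSumming p (u m - u n) :=
      fun m n => (h1 m).1.sub' hp (h1 n).1
    have hdist : ∀ (m n : ℕ) (z : X), dist (u m z) (u n z) ≤
        piLip p (u m - u n) * dist z x₀ := by
      intro m n z
      have := dist_le_of_with hp (piLip_nonneg _)
        (lipSummingWith_piLip hp (hdiffsum m n)) z x₀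
      simpa [Pi.sub_apply, (h1 m).2, (h1 n).2, dist_eq_norm] using this
    have hcauchy : ∀ z : X, CauchySeq fun n => u n z := by
      intro z
      rw [Metric.cauchySeq_iff]
      intro ε hε
      have hd1 : (0:ℝ) < dist z x₀ + 1 := by positivity
      obtain ⟨N, hN⟩ := h2 (ε / (dist z x₀ + 1)) (by positivity)
      refine ⟨N, fun m hm n hn => ?_⟩
      calc dist (u m z) (u n z) ≤ piLip p (u m - u n) * dist z x₀ := hdist m n z
        _ ≤ piLip p (u m - u n) * (dist z x₀ + 1) :=
            mul_le_mul_of_nonneg_left (by linarith) (piLip_nonneg _)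
        _ < ε / (dist z x₀ + 1) * (dist z x₀ + 1) :=
            mul_lt_mul_of_pos_right (hN m n hm hn) hd1
        _ = ε := div_mul_cancel₀ ε hd1.ne'
    have hconv : ∀ z : X, ∃ L : Y, Filter.Tendsto (fun n => u n z) Filter.atTop (nhds L) :=
      fun z => cauchySeq_tendsto_of_complete (hcauchy z)
    set T : X → Y := fun z => (hconv z).choose with hTdef
    have hTlim : ∀ z : X, Filter.Tendsto (fun n => u n z) Filter.atTop (nhds (T z)) :=
      fun z => (hconv z).choose_spec
    have hTx₀ : T x₀ = 0 := by
      refine tendsto_nhds_unique (hTlim x₀) ?_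
      simpa [(h1 0).2] using
        (tendsto_const_nhds : Filter.Tendsto (fun _ : ℕ => (0 : Y)) Filter.atTop (nhds 0))
          |>.congr (fun n => ((h1 n).2).symm)
    -- key estimate
    have hkey : ∀ ε : ℝ, 0 < ε → ∃ N : ℕ, ∀ n, N ≤ n →
        LipSummingWith p (u n - T) ε := by
      intro ε hε
      obtain ⟨N, hN⟩ := h2 ε hε
      refine ⟨N, fun n hn => ?_⟩
      intro k x y
      set M := ⨆ f : {f : X → ℝ // LipschitzWith 1 f},
          ∑ i, |(f : X → ℝ) (x i) - (f : X → ℝ) (y i)| ^ p with hMdef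
      have hM0 : 0 ≤ M := supS_nonneg x y
      have hm : ∀ m, N ≤ m →
          ∑ i, dist (u n (x i) - u m (x i)) (u n (y i) - u m (y i)) ^ p ≤ ε ^ p * M := by
        intro m hmN
        have h3 := lipSummingWith_piLip hp (hdiffsum n m) k x y
        simp only [Pi.sub_apply] at h3
        calc ∑ i, dist (u n (x i) - u m (x i)) (u n (y i) - u m (y i)) ^ p
            ≤ piLip p (u n - u m) ^ p * M := h3
          _ ≤ ε ^ p * M := mul_le_mul_of_nonneg_right
              (Real.rpow_le_rpow (piLip_nonneg _) (hN n m hn hmN).le hp0.le) hM0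
      have hlim : Filter.Tendsto
          (fun m => ∑ i, dist (u n (x i) - u m (x i)) (u n (y i) - u m (y i)) ^ p)
          Filter.atTop
          (nhds (∑ i, dist (u n (x i) - T (x i)) (u n (y i) - T (y i)) ^ p)) := by
        refine tendsto_finset_sum _ fun i _ => ?_
        exact ((tendsto_const_nhds.sub (hTlim (x i))).dist
          (tendsto_const_nhds.sub (hTlim (y i)))).rpow_const (Or.inr hp0.le)
      have := le_of_tendsto hlim (Filter.eventually_atTop.mpr ⟨N, hm⟩)
      simpa [Pi.sub_apply] using this
    -- T is summing
    obtain ⟨N₁, hN₁⟩ := hkey 1 one_pos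
    have hsumN : LipSumming p (u N₁ - T) := ⟨1, zero_le_one, hN₁ N₁ le_rfl⟩
    have hTsum : LipSumming p T := by
      have hTeq : T = u N₁ - (u N₁ - T) := by funext z; simp
      rw [hTeq]
      exact (h1 N₁).1.sub' hp hsumN
    refine ⟨T, hTsum, hTx₀, ?_⟩
    rw [Metric.tendsto_atTop]
    intro ε hε
    obtain ⟨N, hN⟩ := hkey (ε / 2) (by positivity)
    refine ⟨N, fun n hn => ?_⟩
    have hle : piLip p (u n - T) ≤ ε / 2 :=
      csInf_le (hbdd _) ⟨by positivity, hN n hn⟩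
    have hge : 0 ≤ piLip p (u n - T) := piLip_nonneg _
    rw [Real.dist_eq, sub_zero, abs_of_nonneg hge]
    linarith
end
end

section
/- Let X and Y be metric spaces and 1 ≤ q ≤ p < ∞. If T : X → Y is Lipschitz q-summing, then T is Lipschitz p-summing and π_p^L(T) ≤ π_q^L(T). -/
open scoped BigOperators ENNReal
open Finset MeasureTheory

noncomputable section

namespace LipSummingAux

variable {X Y : Type*} [MetricSpace X] [MetricSpace Y]

instance : Nonempty {f : X → ℝ // LipschitzWith 1 f} :=
  ⟨⟨fun _ => 0, (LipschitzWith.const 0).weaken zero_le_one⟩⟩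

lemma abs_sub_le_dist (f : {f : X → ℝ // LipschitzWith 1 f}) (a b : X) :
    |(f : X → ℝ) a - (f : X → ℝ) b| ≤ dist a b := by
  have h := f.2.dist_le_mul a b
  rw [Real.dist_eq] at h
  simpa using h

lemma bddAbove_weighted (t : ℝ) (ht : 0 ≤ t) (n : ℕ) (w : Fin n → ℝ) (hw : ∀ i, 0 ≤ w i)
    (x y : Fin n → X) :
    BddAbove (Set.range fun f : {f : X → ℝ // LipschitzWith 1 f} =>
      ∑ i, w i * |(f : X → ℝ) (x i) - (f : X → ℝ) (y i)| ^ t) := by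
  refine ⟨∑ i, w i * dist (x i) (y i) ^ t, ?_⟩
  rintro _ ⟨f, rfl⟩
  refine Finset.sum_le_sum fun i _ => ?_
  exact mul_le_mul_of_nonneg_left
    (Real.rpow_le_rpow (abs_nonneg _) (abs_sub_le_dist f _ _) ht) (hw i)

lemma bddAbove_plain (t : ℝ) (ht : 0 ≤ t) (n : ℕ) (x y : Fin n → X) :
    BddAbove (Set.range fun f : {f : X → ℝ // LipschitzWith 1 f} =>
      ∑ i, |(f : X → ℝ) (x i) - (f : X → ℝ) (y i)| ^ t) := by
  refine ⟨∑ i, dist (x i) (y i) ^ t, ?_⟩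
  rintro _ ⟨f, rfl⟩
  exact Finset.sum_le_sum fun i _ =>
    Real.rpow_le_rpow (abs_nonneg _) (abs_sub_le_dist f _ _) ht

lemma sup_nonneg_weighted (t : ℝ) (ht : 0 ≤ t) (n : ℕ) (w : Fin n → ℝ) (hw : ∀ i, 0 ≤ w i)
    (x y : Fin n → X) :
    0 ≤ ⨆ f : {f : X → ℝ // LipschitzWith 1 f},
      ∑ i, w i * |(f : X → ℝ) (x i) - (f : X → ℝ) (y i)| ^ t := by
  have hb := bddAbove_weighted (X := X) t ht n w hw x y
  refine le_trans ?_ (le_ciSup hb ⟨fun _ => 0, (LipschitzWith.const 0).weaken zero_le_one⟩)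
  exact Finset.sum_nonneg fun i _ =>
    mul_nonneg (hw i) (Real.rpow_nonneg (abs_nonneg _) _)

lemma sup_nonneg_plain (t : ℝ) (ht : 0 ≤ t) (n : ℕ) (x y : Fin n → X) :
    0 ≤ ⨆ f : {f : X → ℝ // LipschitzWith 1 f},
      ∑ i, |(f : X → ℝ) (x i) - (f : X → ℝ) (y i)| ^ t := by
  have hb := bddAbove_plain (X := X) t ht n x y
  refine le_trans ?_ (le_ciSup hb ⟨fun _ => 0, (LipschitzWith.const 0).weaken zero_le_one⟩)
  exact Finset.sum_nonneg fun i _ => Real.rpow_nonneg (abs_nonneg _) _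

/-- Integer-weighted version of the defining inequality, by repetition of points. -/
lemma weightNat {q : ℝ} {T : X → Y} {C : ℝ} (h : LipSummingWith q T C)
    (n : ℕ) (m : Fin n → ℕ) (x y : Fin n → X) :
    ∑ i, (m i : ℝ) * dist (T (x i)) (T (y i)) ^ q ≤
      C ^ q * ⨆ f : {f : X → ℝ // LipschitzWith 1 f},
        ∑ i, (m i : ℝ) * |(f : X → ℝ) (x i) - (f : X → ℝ) (y i)| ^ q := by
  classical
  set N := Fintype.card (Σ i : Fin n, Fin (m i)) with hN
  let e : Fin N ≃ Σ i : Fin n, Fin (m i) := (Fintype.equivFin _).symm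
  have key : ∀ c : Fin n → ℝ, ∑ j : Fin N, c (e j).1 = ∑ i, (m i : ℝ) * c i := by
    intro c
    rw [Equiv.sum_comp e (fun s : Σ i : Fin n, Fin (m i) => c s.1)]
    rw [← Finset.univ_sigma_univ, Finset.sum_sigma]
    simp [mul_comm]
  have h' := h N (fun j => x (e j).1) (fun j => y (e j).1)
  rw [key (fun i => dist (T (x i)) (T (y i)) ^ q)] at h'
  have hsup : (⨆ f : {f : X → ℝ // LipschitzWith 1 f},
        ∑ j : Fin N, |(f : X → ℝ) (x (e j).1) - (f : X → ℝ) (y (e j).1)| ^ q) =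
      ⨆ f : {f : X → ℝ // LipschitzWith 1 f},
        ∑ i, (m i : ℝ) * |(f : X → ℝ) (x i) - (f : X → ℝ) (y i)| ^ q :=
    iSup_congr fun f => key (fun i => |(f : X → ℝ) (x i) - (f : X → ℝ) (y i)| ^ q)
  rwa [hsup] at h'

/-- Real-weighted version, by rational approximation. -/
lemma weightReal {q : ℝ} (hq : 1 ≤ q) {T : X → Y} {C : ℝ}
    (hC : 0 ≤ C) (h : LipSummingWith q T C)
    (n : ℕ) (w : Fin n → ℝ) (hw : ∀ i, 0 ≤ w i) (x y : Fin n → X) :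
    ∑ i, w i * dist (T (x i)) (T (y i)) ^ q ≤
      C ^ q * ⨆ f : {f : X → ℝ // LipschitzWith 1 f},
        ∑ i, w i * |(f : X → ℝ) (x i) - (f : X → ℝ) (y i)| ^ q := by
  set S := ⨆ f : {f : X → ℝ // LipschitzWith 1 f},
      ∑ i, w i * |(f : X → ℝ) (x i) - (f : X → ℝ) (y i)| ^ q with hSdef
  have hS0 : 0 ≤ S := sup_nonneg_weighted q (le_trans zero_le_one hq) n w hw x y
  set K := ∑ i, dist (x i) (y i) ^ q with hKdef
  have hK0 : 0 ≤ K := Finset.sum_nonneg fun i _ => Real.rpow_nonneg dist_nonneg _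
  have hCq : 0 ≤ C ^ q := Real.rpow_nonneg hC q
  refine le_of_forall_pos_le_add fun ε hε => ?_
  obtain ⟨N, hNgt⟩ := exists_nat_gt (max 1 (C ^ q * K / ε))
  have hN1 : (1 : ℝ) ≤ N := le_of_lt (lt_of_le_of_lt (le_max_left _ _) hNgt)
  have hNpos : (0 : ℝ) < N := lt_of_lt_of_le zero_lt_one hN1
  set m : Fin n → ℕ := fun i => ⌈w i * N⌉₊ with hmdef
  have hwm : ∀ i, w i ≤ (m i : ℝ) / N := by
    intro i
    rw [le_div_iff₀ hNpos]
    exact Nat.le_ceil _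
  have hmw : ∀ i, (m i : ℝ) ≤ w i * N + 1 := by
    intro i
    exact le_of_lt (Nat.ceil_lt_add_one (mul_nonneg (hw i) hNpos.le))
  have step1 : ∑ i, w i * dist (T (x i)) (T (y i)) ^ q ≤
      (1 / N) * ∑ i, (m i : ℝ) * dist (T (x i)) (T (y i)) ^ q := by
    rw [Finset.mul_sum]
    refine Finset.sum_le_sum fun i _ => ?_
    calc w i * dist (T (x i)) (T (y i)) ^ q
        ≤ ((m i : ℝ) / N) * dist (T (x i)) (T (y i)) ^ q :=
          mul_le_mul_of_nonneg_right (hwm i) (Real.rpow_nonneg dist_nonneg _)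
      _ = (1 / N) * ((m i : ℝ) * dist (T (x i)) (T (y i)) ^ q) := by ring
  have step2 := weightNat h n m x y
  -- bound the sup with integer weights
  have step3 : (⨆ f : {f : X → ℝ // LipschitzWith 1 f},
        ∑ i, (m i : ℝ) * |(f : X → ℝ) (x i) - (f : X → ℝ) (y i)| ^ q) ≤ N * S + K := by
    refine ciSup_le fun f => ?_
    have h1 : ∑ i, (m i : ℝ) * |(f : X → ℝ) (x i) - (f : X → ℝ) (y i)| ^ q ≤
        ∑ i, (w i * N + 1) * |(f : X → ℝ) (x i) - (f : X → ℝ) (y i)| ^ q :=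
      Finset.sum_le_sum fun i _ =>
        mul_le_mul_of_nonneg_right (hmw i) (Real.rpow_nonneg (abs_nonneg _) _)
    have h2 : ∑ i, (w i * N + 1) * |(f : X → ℝ) (x i) - (f : X → ℝ) (y i)| ^ q =
        N * (∑ i, w i * |(f : X → ℝ) (x i) - (f : X → ℝ) (y i)| ^ q) +
          ∑ i, |(f : X → ℝ) (x i) - (f : X → ℝ) (y i)| ^ q := by
      rw [Finset.mul_sum, ← Finset.sum_add_distrib]
      refine Finset.sum_congr rfl fun i _ => by ring
    have h3 : ∑ i, w i * |(f : X → ℝ) (x i) - (f : X → ℝ) (y i)| ^ q ≤ S :=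
      le_ciSup (bddAbove_weighted q (le_trans zero_le_one hq) n w hw x y) f
    have h4 : ∑ i, |(f : X → ℝ) (x i) - (f : X → ℝ) (y i)| ^ q ≤ K :=
      Finset.sum_le_sum fun i _ =>
        Real.rpow_le_rpow (abs_nonneg _) (abs_sub_le_dist f _ _)
          (le_trans zero_le_one hq)
    calc ∑ i, (m i : ℝ) * |(f : X → ℝ) (x i) - (f : X → ℝ) (y i)| ^ q
        ≤ N * (∑ i, w i * |(f : X → ℝ) (x i) - (f : X → ℝ) (y i)| ^ q) +
            ∑ i, |(f : X → ℝ) (x i) - (f : X → ℝ) (y i)| ^ q := by rw [← h2]; exact h1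
      _ ≤ N * S + K := by
          have := mul_le_mul_of_nonneg_left h3 hNpos.le
          linarith
  have hfrac : C ^ q * K / N ≤ ε := by
    have h1 : C ^ q * K / ε < N := lt_of_le_of_lt (le_max_right _ _) hNgt
    have h2 : C ^ q * K < N * ε := by
      rw [div_lt_iff₀ hε] at h1
      linarith
    rw [div_le_iff₀ hNpos]
    nlinarith
  calc ∑ i, w i * dist (T (x i)) (T (y i)) ^ q
      ≤ (1 / N) * ∑ i, (m i : ℝ) * dist (T (x i)) (T (y i)) ^ q := step1
    _ ≤ (1 / N) * (C ^ q * (N * S + K)) := by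
        have h5 : ∑ i, (m i : ℝ) * dist (T (x i)) (T (y i)) ^ q ≤ C ^ q * (N * S + K) :=
          step2.trans (mul_le_mul_of_nonneg_left step3 hCq)
        exact mul_le_mul_of_nonneg_left h5 (by positivity)
    _ = C ^ q * S + C ^ q * K / N := by field_simp
    _ ≤ C ^ q * S + ε := by linarith

/-- The key monotonicity: a `q`-summing constant is also a `p`-summing constant. -/
lemma lipSummingWith_mono {p q : ℝ} (hq : 1 ≤ q) (hqp : q ≤ p) {T : X → Y} {C : ℝ}
    (hC : 0 ≤ C) (h : LipSummingWith q T C) : LipSummingWith p T C := by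
  rcases eq_or_lt_of_le hqp with rfl | hlt
  · exact h
  have hp1 : 1 < p := lt_of_le_of_lt hq hlt
  have hp0 : 0 < p := lt_trans zero_lt_one hp1
  have hq0 : 0 < q := lt_of_lt_of_le zero_lt_one hq
  have hpq0 : 0 < p - q := sub_pos.2 hlt
  intro n x y
  set S := ⨆ f : {f : X → ℝ // LipschitzWith 1 f},
      ∑ i, |(f : X → ℝ) (x i) - (f : X → ℝ) (y i)| ^ p with hSdef
  have hS0 : 0 ≤ S := sup_nonneg_plain p hp0.le n x y
  set a : Fin n → ℝ := fun i => dist (T (x i)) (T (y i)) with hadef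
  have ha : ∀ i, 0 ≤ a i := fun i => dist_nonneg
  set A := ∑ i, a i ^ p with hAdef
  have hA0 : 0 ≤ A := Finset.sum_nonneg fun i _ => Real.rpow_nonneg (ha i) _
  set w : Fin n → ℝ := fun i => a i ^ (p - q) with hwdef
  have hw : ∀ i, 0 ≤ w i := fun i => Real.rpow_nonneg (ha i) _
  have key1 : A = ∑ i, w i * a i ^ q := by
    refine Finset.sum_congr rfl fun i _ => ?_
    have : a i ^ ((p - q) + q) = a i ^ (p - q) * a i ^ q :=
      Real.rpow_add' (ha i) (by rw [sub_add_cancel]; exact ne_of_gt hp0)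
    rw [sub_add_cancel] at this
    exact this
  have key2 := weightReal hq hC h n w hw x y
  have hconj : Real.HolderConjugate (p / (p - q)) (p / q) := by
    rw [Real.holderConjugate_iff]
    constructor
    · rw [lt_div_iff₀ hpq0]
      linarith
    · rw [inv_div, inv_div]
      field_simp
      ring
  have holder : ∀ f : {f : X → ℝ // LipschitzWith 1 f},
      ∑ i, w i * |(f : X → ℝ) (x i) - (f : X → ℝ) (y i)| ^ q ≤
        A ^ (1 - q / p) * S ^ (q / p) := by
    intro f
    set g : Fin n → ℝ := fun i => |(f : X → ℝ) (x i) - (f : X → ℝ) (y i)| ^ q with hgdef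
    have hg : ∀ i, 0 ≤ g i := fun i => Real.rpow_nonneg (abs_nonneg _) _
    have H := Real.inner_le_Lp_mul_Lq_of_nonneg (univ : Finset (Fin n)) hconj
      (fun i _ => hw i) (fun i _ => hg i)
    have e1 : ∑ i, w i ^ (p / (p - q)) = A := by
      refine Finset.sum_congr rfl fun i _ => ?_
      rw [hwdef]
      rw [← Real.rpow_mul (ha i)]
      congr 1
      field_simp
    have e2 : ∑ i, g i ^ (p / q) = ∑ i, |(f : X → ℝ) (x i) - (f : X → ℝ) (y i)| ^ p := by
      refine Finset.sum_congr rfl fun i _ => ?_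
      rw [hgdef]
      rw [← Real.rpow_mul (abs_nonneg _)]
      congr 1
      field_simp
    have e3 : (1 : ℝ) / (p / (p - q)) = 1 - q / p := by field_simp
    have e4 : (1 : ℝ) / (p / q) = q / p := by field_simp
    rw [e1, e2, e3, e4] at H
    refine H.trans ?_
    refine mul_le_mul_of_nonneg_left ?_ (Real.rpow_nonneg hA0 _)
    refine Real.rpow_le_rpow (Finset.sum_nonneg fun i _ =>
      Real.rpow_nonneg (abs_nonneg _) _) ?_ (by positivity)
    exact le_ciSup (bddAbove_plain p hp0.le n x y) f
  have hmain : A ≤ C ^ q * (A ^ (1 - q / p) * S ^ (q / p)) := by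
    calc A = ∑ i, w i * a i ^ q := key1
      _ ≤ _ := key2
      _ ≤ C ^ q * (A ^ (1 - q / p) * S ^ (q / p)) :=
          mul_le_mul_of_nonneg_left (ciSup_le holder) (Real.rpow_nonneg hC q)
  -- conclude A ≤ C ^ p * S
  show A ≤ C ^ p * S
  rcases eq_or_lt_of_le hA0 with hA | hApos
  · rw [← hA]
    positivity
  · have hsplit : A = A ^ (1 - q / p) * A ^ (q / p) := by
      rw [← Real.rpow_add hApos]
      norm_num
    have hcancel : A ^ (q / p) ≤ C ^ q * S ^ (q / p) := by
      have h1 : A ^ (1 - q / p) * A ^ (q / p) ≤ A ^ (1 - q / p) * (C ^ q * S ^ (q / p)) := by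
        rw [← hsplit]
        calc A ≤ C ^ q * (A ^ (1 - q / p) * S ^ (q / p)) := hmain
          _ = A ^ (1 - q / p) * (C ^ q * S ^ (q / p)) := by ring
      exact le_of_mul_le_mul_left h1 (Real.rpow_pos_of_pos hApos _)
    have hqp0 : (0 : ℝ) ≤ p / q := by positivity
    have h2 := Real.rpow_le_rpow (Real.rpow_nonneg hA0 _) hcancel hqp0
    rw [← Real.rpow_mul hA0] at h2
    have e5 : q / p * (p / q) = 1 := by field_simp
    rw [e5, Real.rpow_one] at h2
    have e6 : (C ^ q * S ^ (q / p)) ^ (p / q) = C ^ p * S := by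
      rw [Real.mul_rpow (Real.rpow_nonneg hC _) (Real.rpow_nonneg hS0 _),
        ← Real.rpow_mul hC, ← Real.rpow_mul hS0]
      rw [show q * (p / q) = p by field_simp, show q / p * (p / q) = 1 by field_simp,
        Real.rpow_one]
    rwa [e6] at h2

end LipSummingAux

open LipSummingAux in
/-- **Inclusion.** If `1 ≤ q ≤ p < ∞` and `T : X → Y` is Lipschitz `q`-summing, then `T` is
Lipschitz `p`-summing with `π_p^L(T) ≤ π_q^L(T)`. -/
theorem lipschitz_summing_mono {X : Type u} [MetricSpace X] {Y : Type v} [MetricSpace Y]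
    (p q : ℝ) (hq : 1 ≤ q) (hqp : q ≤ p) (T : X → Y) (hT : LipSumming q T) :
    LipSumming p T ∧ piLip p T ≤ piLip q T := by
  obtain ⟨C, hC, h⟩ := hT
  refine ⟨⟨C, hC, lipSummingWith_mono hq hqp hC h⟩, ?_⟩
  refine csInf_le_csInf ⟨0, fun c hc => hc.1⟩ ⟨C, hC, h⟩ ?_
  rintro c ⟨hc0, hc⟩
  exact ⟨hc0, lipSummingWith_mono hq hqp hc0 hc⟩
end
end
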